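/- arXiv:1411.0594 — 5 statements merged into one kernel-verified Lean document; each statement's English description precedes it below -/
import Mathlib

section
/- In the two-user scalar Gaussian MAC with finite-alphabet inputs, for every g₁ > 0 the map g₁ ↦ I(g₁, g₂) is differentiable and its derivative satisfies ∂I/∂g₁ = snr·(a²·g₁·E₁₁ + a·b·g₂·E₁₂), where E₁₁ and E₁₂ are evaluated at amplitudes (g₁, g₂). -/
/-!
Write the output density as the Gaussian mixture `p(y) = ∑ₖ wₖ φ(y - mₖ)` over the joint input
alphabet, with means `mₖ(g) = cₖ + g dₖ` affine in the amplitude, so that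
`I(g) = ∫ ∑ₖ wₖ φ(y - mₖ) log (φ(y - mₖ) / p(y)) dy`. Every integrand in sight is a shifted Gaussian
times a function of at most quartic growth, uniformly for `g` near `g₀`, so we may differentiate
under the integral sign; the terms coming from the normaliser `p` cancel, leaving
`∑ₖ wₖ dₖ ∫ (y - mₖ) φ(y - mₖ) log (φ(y - mₖ) / p(y)) dy`. As `(y - mₖ) φ(y - mₖ) = -∂_y φ(y - mₖ)`
and `∂_y log (φ(y - mₖ) / p(y)) = mₖ - E[m | y]`, integration by parts turns this into
`E[d (m - E[m | y])] = E[(d - E[d | y]) (m - E[m | y])]`. For the MAC, `d = √snr a x₁` and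
`m = √snr (a g₁ x₁ + b g₂ x₂)`, and bilinearity gives `snr (a² g₁ E₁₁ + a b g₂ E₁₂)`.
-/

open MeasureTheory Finset Real

noncomputable section

def stdNormalPDF (t : ℝ) : ℝ := (√(2 * π))⁻¹ * exp (-t ^ 2 / 2)

lemma stdNormalPDF_pos (t : ℝ) : 0 < stdNormalPDF t := by
  unfold stdNormalPDF; positivity

@[fun_prop]
lemma continuous_stdNormalPDF : Continuous stdNormalPDF := by
  unfold stdNormalPDF; fun_prop

lemma stdNormalPDF_le_of_abs_le {s t : ℝ} (h : |s| ≤ |t|) :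
    stdNormalPDF t ≤ stdNormalPDF s := by
  unfold stdNormalPDF
  gcongr _ * exp ?_
  linarith [sq_le_sq.2 h]

lemma stdNormalPDF_zero_le_one : stdNormalPDF 0 ≤ 1 := by
  have : 1 ≤ √(2 * π) := Real.one_le_sqrt.2 (by linarith [pi_gt_three])
  simpa [stdNormalPDF] using inv_le_one_of_one_le₀ this

lemma log_stdNormalPDF_zero_nonpos : log (stdNormalPDF 0) ≤ 0 :=
  log_nonpos (stdNormalPDF_pos 0).le stdNormalPDF_zero_le_one

lemma log_stdNormalPDF (t : ℝ) : log (stdNormalPDF t) = log (stdNormalPDF 0) - t ^ 2 / 2 := by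
  have hc : (√(2 * π))⁻¹ ≠ 0 := by positivity
  simp only [stdNormalPDF, log_mul hc (exp_ne_zero _), log_exp]
  ring

lemma hasDerivAt_stdNormalPDF (t : ℝ) : HasDerivAt stdNormalPDF (-t * stdNormalPDF t) t := by
  refine (((hasDerivAt_pow 2 t).neg.div_const 2).exp.const_mul (√(2 * π))⁻¹).congr_deriv ?_
  simp only [stdNormalPDF, Pi.neg_apply]; ring

lemma hasDerivAt_stdNormalPDF_sub (μ y : ℝ) :
    HasDerivAt (fun y => stdNormalPDF (y - μ)) (-(y - μ) * stdNormalPDF (y - μ)) y := by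
  simpa using (hasDerivAt_stdNormalPDF (y - μ)).comp_sub_const y μ

lemma hasDerivAt_stdNormalPDF_sub_affine {ι : Type*} (c d : ι → ℝ) (k : ι) (y g : ℝ) :
    HasDerivAt (fun g => stdNormalPDF (y - (c + g • d) k))
      (d k * ((y - (c + g • d) k) * stdNormalPDF (y - (c + g • d) k))) g := by
  have := (hasDerivAt_stdNormalPDF (y - (c k + g * d k))).comp g
    (((hasDerivAt_mul_const (d k)).const_add (c k)).const_sub y)
  simp only [Pi.add_apply, Pi.smul_apply, smul_eq_mul]
  exact this.congr_deriv (by ring)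

lemma stdNormalPDF_sub_mem_Icc {μ M : ℝ} (hμ : |μ| ≤ M) (y : ℝ) :
    stdNormalPDF (y - μ) ∈ Set.Icc (stdNormalPDF (|y| + M)) (stdNormalPDF 0) := by
  refine ⟨stdNormalPDF_le_of_abs_le ?_, stdNormalPDF_le_of_abs_le (by simp)⟩
  calc |y - μ| ≤ |y| + |μ| := abs_sub _ _
    _ ≤ |y| + M := by linarith
    _ ≤ |(|y| + M)| := le_abs_self _

lemma abs_le_one_add_sq (y : ℝ) : |y| ≤ 1 + y ^ 2 := by
  nlinarith [sq_abs y, sq_nonneg (|y| - 1)]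

lemma abs_sub_le_mul_one_add_sq {μ M : ℝ} (hμ : |μ| ≤ M) (y : ℝ) :
    |y - μ| ≤ (1 + M) * (1 + y ^ 2) := by
  have := abs_le_one_add_sq y
  nlinarith [abs_sub y μ, abs_nonneg μ, sq_nonneg y]

lemma one_le_one_add_sq_sq (y : ℝ) : 1 ≤ (1 + y ^ 2) ^ 2 :=
  one_le_pow₀ (by nlinarith [sq_nonneg y])

lemma abs_log_le_of_mem_Icc {x y M : ℝ}
    (hx : x ∈ Set.Icc (stdNormalPDF (|y| + M)) (stdNormalPDF 0)) :
    |log x| ≤ (1 - log (stdNormalPDF 0) + M ^ 2) * (1 + y ^ 2) := by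
  have hx0 := (stdNormalPDF_pos _).trans_le hx.1
  have hup : log x ≤ log (stdNormalPDF 0) := log_le_log hx0 hx.2
  have hlow : log (stdNormalPDF (|y| + M)) ≤ log x := log_le_log (stdNormalPDF_pos _) hx.1
  have h0 := log_stdNormalPDF_zero_nonpos
  rw [log_stdNormalPDF] at hlow
  rw [abs_of_nonpos (hup.trans h0)]
  nlinarith [sq_abs y, sq_nonneg (|y| - M), mul_nonneg (sq_nonneg M) (sq_nonneg y)]

def gaussEnvelope (y : ℝ) : ℝ := (1 + y ^ 2) ^ 2 * exp (-y ^ 2 / 4)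

lemma integrable_gaussEnvelope : Integrable gaussEnvelope := by
  have h (n : ℕ) : Integrable fun y : ℝ => y ^ n * exp (-(1 / 4) * y ^ 2) := by
    simpa using integrable_rpow_mul_exp_neg_mul_sq (by norm_num : (0:ℝ) < 1 / 4)
      (s := n) (by linarith [n.cast_nonneg (α := ℝ)])
  refine (((h 0).add ((h 2).const_mul 2)).add (h 4)).congr (.of_forall fun y => ?_)
  simp only [gaussEnvelope, Pi.add_apply]; ring_nf

lemma stdNormalPDF_sub_le {μ M : ℝ} (hμ : |μ| ≤ M) (y : ℝ) :
    stdNormalPDF (y - μ) ≤ exp (M ^ 2 / 2) * exp (-y ^ 2 / 4) := by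
  have hsq : μ ^ 2 ≤ M ^ 2 := sq_le_sq.2 (hμ.trans (le_abs_self M))
  calc stdNormalPDF (y - μ) ≤ 1 * exp (-(y - μ) ^ 2 / 2) := by
        unfold stdNormalPDF; gcongr; simpa [stdNormalPDF] using stdNormalPDF_zero_le_one
    _ ≤ exp (M ^ 2 / 2) * exp (-y ^ 2 / 4) := by
        rw [one_mul, ← exp_add]; gcongr; nlinarith [sq_nonneg (y - 2 * μ)]

lemma abs_stdNormalPDF_sub_mul_le {μ M C h y : ℝ} (hμ : |μ| ≤ M)
    (hh : |h| ≤ C * (1 + y ^ 2) ^ 2) :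
    |stdNormalPDF (y - μ) * h| ≤ C * exp (M ^ 2 / 2) * gaussEnvelope y := by
  rw [abs_mul, abs_of_pos (stdNormalPDF_pos _)]
  calc stdNormalPDF (y - μ) * |h| ≤ exp (M ^ 2 / 2) * exp (-y ^ 2 / 4) * (C * (1 + y ^ 2) ^ 2) :=
        mul_le_mul (stdNormalPDF_sub_le hμ y) hh (abs_nonneg h) (by positivity)
    _ = C * exp (M ^ 2 / 2) * gaussEnvelope y := by unfold gaussEnvelope; ring

lemma integrable_stdNormalPDF_sub_mul {h : ℝ → ℝ} (hh : AEStronglyMeasurable h) (μ C : ℝ)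
    (hC : ∀ y, |h y| ≤ C * (1 + y ^ 2) ^ 2) :
    Integrable fun y => stdNormalPDF (y - μ) * h y :=
  (integrable_gaussEnvelope.const_mul (C * exp (|μ| ^ 2 / 2))).mono'
    ((continuous_stdNormalPDF.comp (continuous_sub_right μ)).aestronglyMeasurable.mul hh)
    (.of_forall fun y => abs_stdNormalPDF_sub_mul_le le_rfl (hC y))

lemma HasDerivAt.mul_log_div {f h : ℝ → ℝ} {f' h' x : ℝ} (hf : HasDerivAt f f' x)
    (hh : HasDerivAt h h' x) (hfx : f x ≠ 0) (hhx : h x ≠ 0) :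
    HasDerivAt (fun x => f x * Real.log (f x / h x))
      (f' * Real.log (f x / h x) + (f' - f x * h' / h x)) x :=
  (hf.mul ((hf.fun_div hh hhx).log (div_ne_zero hfx hhx))).congr_deriv (by field_simp)

lemma HasDerivAt.sum_mul_mul_log_div_sum {ι : Type*} [Fintype ι] {w f' : ι → ℝ}
    {f : ι → ℝ → ℝ} {x : ℝ} (hf : ∀ k, HasDerivAt (f k) (f' k) x)
    (hfx : ∀ k, f k x ≠ 0) (hsx : ∑ k, w k * f k x ≠ 0) :
    HasDerivAt (fun x => ∑ k, w k * f k x * Real.log (f k x / ∑ j, w j * f j x))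
      (∑ k, w k * f' k * Real.log (f k x / ∑ j, w j * f j x)) x := by
  set s := ∑ j, w j * f j x
  set s' := ∑ j, w j * f' j
  have hs : HasDerivAt (fun x => ∑ j, w j * f j x) s' x :=
    .fun_sum fun j _ => (hf j).const_mul (w j)
  have hcancel : ∑ k, w k * (f' k - f k x * s' / s) = 0 := by
    -- the sum is `s' - s * s' / s`
    rw [← sub_eq_zero.2 (mul_div_cancel_left₀ s' hsx).symm, sum_mul, sum_div,
      ← sum_sub_distrib]
    exact sum_congr rfl fun k _ => by ring
  simp only [mul_assoc]
  refine (HasDerivAt.fun_sum fun k _ =>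
    ((hf k).mul_log_div hs (hfx k) hsx).const_mul (w k)).congr_deriv ?_
  simp only [mul_add, sum_add_distrib]
  exact add_eq_left.2 hcancel

section Mixture

variable {ι : Type*} [Fintype ι] (w m : ι → ℝ)

def mixturePDF (y : ℝ) : ℝ := ∑ k, w k * stdNormalPDF (y - m k)

def condMean (u : ι → ℝ) (y : ℝ) : ℝ :=
  (∑ k, u k * (w k * stdNormalPDF (y - m k))) / mixturePDF w m y

/-- `p(y) Cov(u, t | y)`; its integral is the error covariance `E[(u - E[u|y]) (t - E[t|y])]`. -/
def errorCovDensity (u t : ι → ℝ) (y : ℝ) : ℝ :=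
  ∑ k, w k * stdNormalPDF (y - m k) * ((u k - condMean w m u y) * (t k - condMean w m t y))

def infoDensity (μ y : ℝ) : ℝ := log (stdNormalPDF (y - μ) / mixturePDF w m y)

def mutualInfoIntegrand (y : ℝ) : ℝ :=
  ∑ k, w k * stdNormalPDF (y - m k) * infoDensity w m (m k) y

def mutualInfoIntegrandDeriv (d : ι → ℝ) (y : ℝ) : ℝ :=
  ∑ k, w k * d k * ((y - m k) * stdNormalPDF (y - m k) * infoDensity w m (m k) y)

variable {w}

lemma mixturePDF_mem_Icc (hw : w ∈ stdSimplex ℝ ι) {M : ℝ} (hm : ‖m‖ ≤ M)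
    (y : ℝ) : mixturePDF w m y ∈ Set.Icc (stdNormalPDF (|y| + M)) (stdNormalPDF 0) :=
  (convex_Icc _ _).sum_mem (fun k _ => hw.1 k) hw.2
    fun k _ => stdNormalPDF_sub_mem_Icc ((norm_le_pi_norm m k).trans hm) y

lemma mixturePDF_pos (hw : w ∈ stdSimplex ℝ ι) (y : ℝ) :
    0 < mixturePDF w m y :=
  (stdNormalPDF_pos _).trans_le (mixturePDF_mem_Icc m hw le_rfl y).1

lemma continuous_mixturePDF : Continuous (mixturePDF w m) := by
  unfold mixturePDF; fun_prop

lemma hasDerivAt_mixturePDF (hw : w ∈ stdSimplex ℝ ι) (y : ℝ) :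
    HasDerivAt (mixturePDF w m) (mixturePDF w m y * (condMean w m m y - y)) y := by
  have h := HasDerivAt.fun_sum fun k (_ : k ∈ univ) =>
    (hasDerivAt_stdNormalPDF_sub (m k) y).const_mul (w k)
  refine h.congr_deriv ?_
  rw [mul_sub, condMean, mul_div_cancel₀ _ (mixturePDF_pos m hw y).ne', mixturePDF, sum_mul,
    ← sum_sub_distrib]
  exact sum_congr rfl fun k _ => by ring

lemma abs_condMean_le (hw : w ∈ stdSimplex ℝ ι) (u : ι → ℝ) (y : ℝ) :
    |condMean w m u y| ≤ ‖u‖ := by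
  have hp := mixturePDF_pos m hw y
  rw [condMean, abs_div, abs_of_pos hp, div_le_iff₀ hp, mixturePDF, mul_sum]
  refine (abs_sum_le_sum_abs _ _).trans (sum_le_sum fun k _ => ?_)
  rw [abs_mul, abs_of_nonneg (mul_nonneg (hw.1 k) (stdNormalPDF_pos _).le)]
  exact mul_le_mul_of_nonneg_right (norm_le_pi_norm u k)
    (mul_nonneg (hw.1 k) (stdNormalPDF_pos _).le)

lemma abs_sub_condMean_le (hw : w ∈ stdSimplex ℝ ι) (u : ι → ℝ) (k : ι)
    (y : ℝ) : |u k - condMean w m u y| ≤ 2 * ‖u‖ := by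
  have := norm_le_pi_norm u k
  rw [Real.norm_eq_abs] at this
  linarith [abs_sub (u k) (condMean w m u y), abs_condMean_le m hw u y]

lemma continuous_condMean (hw : w ∈ stdSimplex ℝ ι) (u : ι → ℝ) :
    Continuous (condMean w m u) := by
  unfold condMean
  exact .div (by fun_prop) (continuous_mixturePDF m) fun y => (mixturePDF_pos m hw y).ne'

lemma sum_mul_sub_condMean (hw : w ∈ stdSimplex ℝ ι) (t : ι → ℝ) (y : ℝ) :
    ∑ k, w k * stdNormalPDF (y - m k) * (t k - condMean w m t y) = 0 := by
  have hp := (mixturePDF_pos m hw y).ne'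
  simp only [mul_sub, sum_sub_distrib, ← sum_mul]
  rw [condMean, ← mixturePDF, mul_div_cancel₀ _ hp, sub_eq_zero]
  exact sum_congr rfl fun k _ => by ring

lemma errorCovDensity_eq_sum (hw : w ∈ stdSimplex ℝ ι) (u t : ι → ℝ) (y : ℝ) :
    errorCovDensity w m u t y =
      ∑ k, w k * stdNormalPDF (y - m k) * u k * (t k - condMean w m t y) := by
  set t' := condMean w m t y
  calc errorCovDensity w m u t y
      = ∑ k, (w k * stdNormalPDF (y - m k) * u k * (t k - t') -
          condMean w m u y * (w k * stdNormalPDF (y - m k) * (t k - t'))) :=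
        sum_congr rfl fun k _ => by ring
    _ = ∑ k, w k * stdNormalPDF (y - m k) * u k * (t k - t') := by
        rw [sum_sub_distrib, ← mul_sum, sum_mul_sub_condMean m hw, mul_zero, sub_zero]

lemma condMean_add (u t : ι → ℝ) (y : ℝ) :
    condMean w m (u + t) y = condMean w m u y + condMean w m t y := by
  simp only [condMean, Pi.add_apply, add_mul, sum_add_distrib, add_div]

lemma condMean_smul (r : ℝ) (u : ι → ℝ) (y : ℝ) :
    condMean w m (r • u) y = r * condMean w m u y := by
  simp only [condMean, Pi.smul_apply, smul_eq_mul, mul_assoc, ← mul_sum, mul_div_assoc]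

lemma errorCovDensity_smul_left (r : ℝ) (u t : ι → ℝ) (y : ℝ) :
    errorCovDensity w m (r • u) t y = r * errorCovDensity w m u t y := by
  simp only [errorCovDensity, condMean_smul, mul_sum]
  exact sum_congr rfl fun k _ => by simp only [Pi.smul_apply, smul_eq_mul]; ring

lemma errorCovDensity_smul_right (r : ℝ) (u t : ι → ℝ) (y : ℝ) :
    errorCovDensity w m u (r • t) y = r * errorCovDensity w m u t y := by
  simp only [errorCovDensity, condMean_smul, mul_sum]
  exact sum_congr rfl fun k _ => by simp only [Pi.smul_apply, smul_eq_mul]; ring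

lemma errorCovDensity_add_right (u t t' : ι → ℝ) (y : ℝ) :
    errorCovDensity w m u (t + t') y = errorCovDensity w m u t y + errorCovDensity w m u t' y := by
  simp only [errorCovDensity, condMean_add, ← sum_add_distrib]
  exact sum_congr rfl fun k _ => by simp only [Pi.add_apply]; ring

lemma integrable_errorCovDensity (hw : w ∈ stdSimplex ℝ ι) (u t : ι → ℝ) :
    Integrable (errorCovDensity w m u t) := by
  have hu := continuous_condMean m hw u
  have ht := continuous_condMean m hw t
  refine integrable_finsetSum univ fun k _ => ?_
  refine (integrable_stdNormalPDF_sub_mul (h := fun y =>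
      w k * ((u k - condMean w m u y) * (t k - condMean w m t y)))
    (by fun_prop) (m k) (w k * ((2 * ‖u‖) * (2 * ‖t‖))) fun y => ?_).congr
    (.of_forall fun y => by ring)
  rw [abs_mul, abs_mul, abs_of_nonneg (hw.1 k)]
  have hwk := hw.1 k
  refine (le_mul_of_one_le_right (by positivity) (one_le_one_add_sq_sq y)).trans' ?_
  gcongr
  · exact abs_sub_condMean_le m hw u k y
  · exact abs_sub_condMean_le m hw t k y

lemma continuous_infoDensity (hw : w ∈ stdSimplex ℝ ι) (μ : ℝ) :
    Continuous (infoDensity w m μ) := by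
  have hp := mixturePDF_pos m hw
  exact .log (.div (by fun_prop) (continuous_mixturePDF m) fun y => (hp y).ne')
    fun y => (div_pos (stdNormalPDF_pos _) (hp y)).ne'

lemma abs_infoDensity_le (hw : w ∈ stdSimplex ℝ ι) {μ M : ℝ} (hμ : |μ| ≤ M)
    (hm : ‖m‖ ≤ M) (y : ℝ) :
    |infoDensity w m μ y| ≤ 2 * (1 - log (stdNormalPDF 0) + M ^ 2) * (1 + y ^ 2) := by
  rw [infoDensity, log_div (stdNormalPDF_pos _).ne' (mixturePDF_pos m hw y).ne']
  have h₁ := abs_log_le_of_mem_Icc (stdNormalPDF_sub_mem_Icc hμ y)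
  have h₂ := abs_log_le_of_mem_Icc (mixturePDF_mem_Icc m hw hm y)
  linarith [abs_sub (log (stdNormalPDF (y - μ))) (log (mixturePDF w m y))]

lemma hasDerivAt_infoDensity (hw : w ∈ stdSimplex ℝ ι) (μ y : ℝ) :
    HasDerivAt (infoDensity w m μ) (μ - condMean w m m y) y := by
  have hp := (mixturePDF_pos m hw y).ne'
  have hφ := (stdNormalPDF_pos (y - μ)).ne'
  refine (((hasDerivAt_stdNormalPDF_sub μ y).fun_div (hasDerivAt_mixturePDF m hw y) hp).log
    (div_ne_zero hφ hp)).congr_deriv ?_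
  field_simp
  ring

lemma abs_sub_mul_infoDensity_le (hw : w ∈ stdSimplex ℝ ι) {μ M : ℝ}
    (hμ : |μ| ≤ M) (hm : ‖m‖ ≤ M) (y : ℝ) :
    |(y - μ) * infoDensity w m μ y| ≤
      (1 + M) * (2 * (1 - log (stdNormalPDF 0) + M ^ 2)) * (1 + y ^ 2) ^ 2 := by
  have := log_stdNormalPDF_zero_nonpos
  rw [abs_mul]
  calc |y - μ| * |infoDensity w m μ y|
      ≤ ((1 + M) * (1 + y ^ 2)) * (2 * (1 - log (stdNormalPDF 0) + M ^ 2) * (1 + y ^ 2)) :=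
        mul_le_mul (abs_sub_le_mul_one_add_sq hμ y) (abs_infoDensity_le m hw hμ hm y)
          (abs_nonneg _) (by nlinarith [abs_nonneg μ, sq_nonneg y])
    _ = _ := by ring

lemma integrable_stdNormalPDF_sub_mul_sub_condMean (hw : w ∈ stdSimplex ℝ ι)
    (μ : ℝ) : Integrable fun y => stdNormalPDF (y - μ) * (μ - condMean w m m y) := by
  refine integrable_stdNormalPDF_sub_mul
    (continuous_const.sub (continuous_condMean m hw m)).aestronglyMeasurable μ (|μ| + ‖m‖)
    fun y => ?_
  have := abs_condMean_le m hw m y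
  calc |μ - condMean w m m y| ≤ |μ| + ‖m‖ := (abs_sub _ _).trans (by linarith)
    _ ≤ (|μ| + ‖m‖) * (1 + y ^ 2) ^ 2 :=
        le_mul_of_one_le_right (by positivity) (one_le_one_add_sq_sq y)

lemma integrable_stdNormalPDF_sub_mul_infoDensity (hw : w ∈ stdSimplex ℝ ι)
    (μ : ℝ) : Integrable fun y => stdNormalPDF (y - μ) * infoDensity w m μ y :=
  integrable_stdNormalPDF_sub_mul (continuous_infoDensity m hw μ).aestronglyMeasurable μ
    (2 * (1 - log (stdNormalPDF 0) + (|μ| + ‖m‖) ^ 2)) fun y =>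
  (abs_infoDensity_le m hw (le_add_of_nonneg_right (norm_nonneg m))
    (le_add_of_nonneg_left (abs_nonneg μ)) y).trans
    (mul_le_mul_of_nonneg_left (le_self_pow₀ (by nlinarith [sq_nonneg y]) two_ne_zero)
      (by linarith [log_stdNormalPDF_zero_nonpos, sq_nonneg (|μ| + ‖m‖)]))

lemma integrable_sub_mul_stdNormalPDF_mul_infoDensity (hw : w ∈ stdSimplex ℝ ι) (μ : ℝ) :
    Integrable fun y => (y - μ) * stdNormalPDF (y - μ) * infoDensity w m μ y :=
  (integrable_stdNormalPDF_sub_mul (h := fun y => (y - μ) * infoDensity w m μ y)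
    ((continuous_sub_right μ).mul (continuous_infoDensity m hw μ)).aestronglyMeasurable μ _
    (abs_sub_mul_infoDensity_le m hw (le_add_of_nonneg_right (norm_nonneg m))
      (le_add_of_nonneg_left (abs_nonneg μ)))).congr (.of_forall fun y => by ring)

lemma integral_sub_mul_stdNormalPDF_mul_infoDensity (hw : w ∈ stdSimplex ℝ ι) (μ : ℝ) :
    ∫ y, (y - μ) * stdNormalPDF (y - μ) * infoDensity w m μ y =
      ∫ y, stdNormalPDF (y - μ) * (μ - condMean w m m y) := by
  have h := integral_mul_deriv_eq_deriv_mul_of_integrable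
    (fun y _ => hasDerivAt_stdNormalPDF_sub μ y) (fun y _ => hasDerivAt_infoDensity m hw μ y)
    (integrable_stdNormalPDF_sub_mul_sub_condMean m hw μ)
    ((integrable_sub_mul_stdNormalPDF_mul_infoDensity m hw μ).neg.congr
      (.of_forall fun y => by simp only [Pi.neg_apply, Pi.mul_apply]; ring))
    (integrable_stdNormalPDF_sub_mul_infoDensity m hw μ)
  rw [h, ← integral_neg]
  simp only [neg_mul, neg_neg]

lemma hasDerivAt_mutualInfoIntegrand (hw : w ∈ stdSimplex ℝ ι) (c d : ι → ℝ) (g y : ℝ) :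
    HasDerivAt (fun g => mutualInfoIntegrand w (c + g • d) y)
      (mutualInfoIntegrandDeriv w (c + g • d) d y) g := by
  have h := HasDerivAt.sum_mul_mul_log_div_sum (w := w)
    (fun k => hasDerivAt_stdNormalPDF_sub_affine c d k y g) (fun k => (stdNormalPDF_pos _).ne')
    (mixturePDF_pos _ hw y).ne'
  refine h.congr_deriv ?_
  exact sum_congr rfl fun k _ => by rw [infoDensity, mixturePDF]; ring

lemma integrable_mutualInfoIntegrand (hw : w ∈ stdSimplex ℝ ι) :
    Integrable (mutualInfoIntegrand w m) := by
  refine (integrable_finsetSum univ fun k _ =>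
    (integrable_stdNormalPDF_sub_mul_infoDensity m hw (m k)).const_mul (w k)).congr
    (.of_forall fun y => ?_)
  simp only [mutualInfoIntegrand, mul_assoc]

lemma integrable_mutualInfoIntegrandDeriv (hw : w ∈ stdSimplex ℝ ι) (d : ι → ℝ) :
    Integrable (mutualInfoIntegrandDeriv w m d) :=
  integrable_finsetSum univ fun k _ =>
    (integrable_sub_mul_stdNormalPDF_mul_infoDensity m hw (m k)).const_mul (w k * d k)

lemma abs_mutualInfoIntegrandDeriv_le (hw : w ∈ stdSimplex ℝ ι) {M : ℝ} (hm : ‖m‖ ≤ M)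
    (d : ι → ℝ) (y : ℝ) :
    |mutualInfoIntegrandDeriv w m d y| ≤ (∑ k, w k * |d k|) *
      ((1 + M) * (2 * (1 - log (stdNormalPDF 0) + M ^ 2)) * exp (M ^ 2 / 2)) * gaussEnvelope y := by
  rw [sum_mul, sum_mul]
  refine (abs_sum_le_sum_abs _ _).trans (sum_le_sum fun k _ => ?_)
  have hmk := (norm_le_pi_norm m k).trans hm
  have h := abs_stdNormalPDF_sub_mul_le hmk (abs_sub_mul_infoDensity_le m hw hmk hm y)
  rw [show w k * d k * ((y - m k) * stdNormalPDF (y - m k) * infoDensity w m (m k) y) =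
      w k * d k * (stdNormalPDF (y - m k) * ((y - m k) * infoDensity w m (m k) y)) by ring,
    abs_mul, abs_mul, abs_of_nonneg (hw.1 k)]
  exact (mul_le_mul_of_nonneg_left h (mul_nonneg (hw.1 k) (abs_nonneg _))).trans_eq (by ring)

lemma integral_mutualInfoIntegrandDeriv (hw : w ∈ stdSimplex ℝ ι) (d : ι → ℝ) :
    ∫ y, mutualInfoIntegrandDeriv w m d y = ∫ y, errorCovDensity w m d m y := by
  have hint := fun k => integrable_stdNormalPDF_sub_mul_sub_condMean m hw (m k)
  unfold mutualInfoIntegrandDeriv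
  rw [integral_finsetSum _ fun k _ =>
    (integrable_sub_mul_stdNormalPDF_mul_infoDensity m hw (m k)).const_mul _]
  simp only [integral_const_mul, integral_sub_mul_stdNormalPDF_mul_infoDensity m hw]
  simp only [← integral_const_mul]
  rw [← integral_finsetSum _ fun k _ => (hint k).const_mul _]
  refine integral_congr_ae (.of_forall fun y => ?_)
  rw [errorCovDensity_eq_sum m hw]
  exact sum_congr rfl fun k _ => by ring

theorem hasDerivAt_integral_mutualInfoIntegrand (hw : w ∈ stdSimplex ℝ ι)
    (c d : ι → ℝ) (g₀ : ℝ) :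
    HasDerivAt (fun g => ∫ y, mutualInfoIntegrand w (c + g • d) y)
      (∫ y, errorCovDensity w (c + g₀ • d) d (c + g₀ • d) y) g₀ := by
  have hM : ∀ g ∈ Metric.ball g₀ 1, ‖c + g • d‖ ≤ ‖c‖ + (|g₀| + 1) * ‖d‖ := by
    intro g hg
    have : |g| ≤ |g₀| + 1 := by
      rw [Metric.mem_ball, Real.dist_eq] at hg
      linarith [abs_sub_abs_le_abs_sub g g₀]
    calc ‖c + g • d‖ ≤ ‖c‖ + |g| * ‖d‖ := by
          simpa [norm_smul] using norm_add_le c (g • d)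
      _ ≤ _ := by gcongr
  rw [← integral_mutualInfoIntegrandDeriv _ hw]
  exact (hasDerivAt_integral_of_dominated_loc_of_deriv_le (Metric.ball_mem_nhds g₀ one_pos)
    (.of_forall fun g => (integrable_mutualInfoIntegrand _ hw).aestronglyMeasurable)
    (integrable_mutualInfoIntegrand _ hw)
    (integrable_mutualInfoIntegrandDeriv _ hw d).aestronglyMeasurable
    (.of_forall fun y g hg => abs_mutualInfoIntegrandDeriv_le _ hw (hM g hg) d y)
    (integrable_gaussEnvelope.const_mul _)
    (.of_forall fun y g _ => hasDerivAt_mutualInfoIntegrand hw c d g y)).2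

theorem hasDerivAt_integral_mutualInfoIntegrand_smul_add_smul (hw : w ∈ stdSimplex ℝ ι)
    (u₁ u₂ : ι → ℝ) (α β g₀ : ℝ) :
    HasDerivAt (fun g => ∫ y, mutualInfoIntegrand w (β • u₂ + g • α • u₁) y)
      (α * (α * g₀ * (∫ y, errorCovDensity w (β • u₂ + g₀ • α • u₁) u₁ u₁ y) +
        β * ∫ y, errorCovDensity w (β • u₂ + g₀ • α • u₁) u₁ u₂ y)) g₀ := by
  set m₀ := β • u₂ + g₀ • α • u₁ with hm₀
  have hcov : ∀ y, errorCovDensity w m₀ (α • u₁) m₀ y =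
      α * (α * g₀ * errorCovDensity w m₀ u₁ u₁ y + β * errorCovDensity w m₀ u₁ u₂ y) := by
    intro y
    have ht : m₀ = β • u₂ + (α * g₀) • u₁ := by rw [hm₀, smul_smul, mul_comm]
    calc errorCovDensity w m₀ (α • u₁) m₀ y
        = errorCovDensity w m₀ (α • u₁) (β • u₂ + (α * g₀) • u₁) y := by rw [← ht]
      _ = _ := by
          rw [errorCovDensity_smul_left, errorCovDensity_add_right, errorCovDensity_smul_right,
            errorCovDensity_smul_right]
          ring
  have h := hasDerivAt_integral_mutualInfoIntegrand hw (β • u₂) (α • u₁) g₀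
  rwa [integral_congr_ae (.of_forall hcov), integral_const_mul,
    integral_add ((integrable_errorCovDensity _ hw _ _).const_mul _)
      ((integrable_errorCovDensity _ hw _ _).const_mul _), integral_const_mul,
    integral_const_mul] at h

end Mixture

end

theorem stmt_4_general {ι₁ ι₂ : Type*} [Fintype ι₁] [Fintype ι₂]
    (v₁ : ι₁ → ℝ) (v₂ : ι₂ → ℝ) (p₁ : ι₁ → ℝ) (p₂ : ι₂ → ℝ)
    (hp₁pos : ∀ i, 0 < p₁ i) (hp₁sum : ∑ i, p₁ i = 1)
    (hp₂pos : ∀ j, 0 < p₂ j) (hp₂sum : ∑ j, p₂ j = 1)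
    (snr a b g₂ : ℝ) (hsnr : 0 < snr)
    (φ : ℝ → ℝ) (hφ : φ = fun t => (Real.sqrt (2 * Real.pi))⁻¹ * Real.exp (-t ^ 2 / 2))
    (μv : ℝ → ℝ → ι₁ → ι₂ → ℝ)
    (hμv : μv = fun g₁ g₂ i j => Real.sqrt snr * (a * g₁ * v₁ i + b * g₂ * v₂ j))
    (py : ℝ → ℝ → ℝ → ℝ)
    (hpy : py = fun g₁ g₂ y => ∑ i, ∑ j, p₁ i * p₂ j * φ (y - μv g₁ g₂ i j))
    (I : ℝ → ℝ → ℝ)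
    (hI : I = fun g₁ g₂ => ∫ y : ℝ, ∑ i, ∑ j, p₁ i * p₂ j * φ (y - μv g₁ g₂ i j) *
        Real.log (φ (y - μv g₁ g₂ i j) / py g₁ g₂ y))
    (xhat₁ : ℝ → ℝ → ℝ → ℝ)
    (hxhat₁ : xhat₁ = fun g₁ g₂ y =>
        (∑ i, ∑ j, v₁ i * (p₁ i * p₂ j * φ (y - μv g₁ g₂ i j))) / py g₁ g₂ y)
    (xhat₂ : ℝ → ℝ → ℝ → ℝ)
    (hxhat₂ : xhat₂ = fun g₁ g₂ y =>
        (∑ i, ∑ j, v₂ j * (p₁ i * p₂ j * φ (y - μv g₁ g₂ i j))) / py g₁ g₂ y)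
    (E₁₁ : ℝ → ℝ → ℝ)
    (hE₁₁ : E₁₁ = fun g₁ g₂ => ∫ y : ℝ, ∑ i, ∑ j, p₁ i * p₂ j * φ (y - μv g₁ g₂ i j) *
        (v₁ i - xhat₁ g₁ g₂ y) ^ 2)
    (E₁₂ : ℝ → ℝ → ℝ)
    (hE₁₂ : E₁₂ = fun g₁ g₂ => ∫ y : ℝ, ∑ i, ∑ j, p₁ i * p₂ j * φ (y - μv g₁ g₂ i j) *
        ((v₁ i - xhat₁ g₁ g₂ y) * (v₂ j - xhat₂ g₁ g₂ y))) :
    ∀ g₁ : ℝ, 0 < g₁ →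
      HasDerivAt (fun g => I g g₂)
        (snr * (a ^ 2 * g₁ * E₁₁ g₁ g₂ + a * b * g₂ * E₁₂ g₁ g₂)) g₁ := by
  intro g₁ _
  set w : ι₁ × ι₂ → ℝ := fun k => p₁ k.1 * p₂ k.2 with hw_def
  have hw : w ∈ stdSimplex ℝ (ι₁ × ι₂) :=
    ⟨fun k => (mul_pos (hp₁pos _) (hp₂pos _)).le, by
      simp only [hw_def, Fintype.sum_prod_type, ← mul_sum, hp₂sum, mul_one, hp₁sum]⟩
  have key := hasDerivAt_integral_mutualInfoIntegrand_smul_add_smul hw (fun k => v₁ k.1)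
    (fun k => v₂ k.2) (√snr * a) (√snr * b * g₂) g₁
  rw [show ∀ X Y, snr * (a ^ 2 * g₁ * X + a * b * g₂ * Y) =
      √snr * a * (√snr * a * g₁ * X + √snr * b * g₂ * Y) from fun X Y => by
    linear_combination (-(a ^ 2 * g₁ * X) - a * b * g₂ * Y) * Real.mul_self_sqrt hsnr.le]
  change φ = stdNormalPDF at hφ
  subst hφ hμv hpy hI hxhat₁ hxhat₂ hE₁₁ hE₁₂
  simp only [mutualInfoIntegrand, errorCovDensity, infoDensity, condMean, mixturePDF,
    Fintype.sum_prod_type, hw_def, Pi.add_apply, Pi.smul_apply, smul_eq_mul] at key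
  have hmean : ∀ g i j, √snr * (a * g * v₁ i + b * g₂ * v₂ j) =
      √snr * b * g₂ * v₂ j + g * (√snr * a * v₁ i) := fun _ _ _ => by ring
  simpa only [hmean, sq] using key

/-- Paper's Theorem 2 (first gradient formula), real-valued convention: in the two-user scalar
Gaussian MAC with finite-alphabet inputs, for every amplitude `g₁ > 0` the mutual information
is differentiable in `g₁` with `∂I/∂g₁ = snr·(a²·g₁·E₁₁ + a·b·g₂·E₁₂)`. -/
theorem stmt_4 {ι₁ ι₂ : Type*} [Fintype ι₁] [Fintype ι₂]
    (v₁ : ι₁ → ℝ) (v₂ : ι₂ → ℝ) (p₁ : ι₁ → ℝ) (p₂ : ι₂ → ℝ)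
    (hp₁pos : ∀ i, 0 < p₁ i) (hp₁sum : ∑ i, p₁ i = 1)
    (hp₂pos : ∀ j, 0 < p₂ j) (hp₂sum : ∑ j, p₂ j = 1)
    (snr a b g₂ : ℝ) (hsnr : 0 < snr) (hg₂ : 0 ≤ g₂)
    (φ : ℝ → ℝ) (hφ : φ = fun t => (Real.sqrt (2 * Real.pi))⁻¹ * Real.exp (-t ^ 2 / 2))
    (μv : ℝ → ℝ → ι₁ → ι₂ → ℝ)
    (hμv : μv = fun g₁ g₂ i j => Real.sqrt snr * (a * g₁ * v₁ i + b * g₂ * v₂ j))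
    (py : ℝ → ℝ → ℝ → ℝ)
    (hpy : py = fun g₁ g₂ y => ∑ i, ∑ j, p₁ i * p₂ j * φ (y - μv g₁ g₂ i j))
    (I : ℝ → ℝ → ℝ)
    (hI : I = fun g₁ g₂ => ∫ y : ℝ, ∑ i, ∑ j, p₁ i * p₂ j * φ (y - μv g₁ g₂ i j) *
        Real.log (φ (y - μv g₁ g₂ i j) / py g₁ g₂ y))
    (xhat₁ : ℝ → ℝ → ℝ → ℝ)
    (hxhat₁ : xhat₁ = fun g₁ g₂ y =>
        (∑ i, ∑ j, v₁ i * (p₁ i * p₂ j * φ (y - μv g₁ g₂ i j))) / py g₁ g₂ y)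
    (xhat₂ : ℝ → ℝ → ℝ → ℝ)
    (hxhat₂ : xhat₂ = fun g₁ g₂ y =>
        (∑ i, ∑ j, v₂ j * (p₁ i * p₂ j * φ (y - μv g₁ g₂ i j))) / py g₁ g₂ y)
    (E₁₁ : ℝ → ℝ → ℝ)
    (hE₁₁ : E₁₁ = fun g₁ g₂ => ∫ y : ℝ, ∑ i, ∑ j, p₁ i * p₂ j * φ (y - μv g₁ g₂ i j) *
        (v₁ i - xhat₁ g₁ g₂ y) ^ 2)
    (E₁₂ : ℝ → ℝ → ℝ)
    (hE₁₂ : E₁₂ = fun g₁ g₂ => ∫ y : ℝ, ∑ i, ∑ j, p₁ i * p₂ j * φ (y - μv g₁ g₂ i j) *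
        ((v₁ i - xhat₁ g₁ g₂ y) * (v₂ j - xhat₂ g₁ g₂ y))) :
    ∀ g₁ : ℝ, 0 < g₁ →
      HasDerivAt (fun g => I g g₂)
        (snr * (a ^ 2 * g₁ * E₁₁ g₁ g₂ + a * b * g₂ * E₁₂ g₁ g₂)) g₁ :=
  stmt_4_general v₁ v₂ p₁ p₂ hp₁pos hp₁sum hp₂pos hp₂sum snr a b g₂ hsnr φ hφ μv hμv py hpy I hI
    xhat₁ hxhat₁ xhat₂ hxhat₂ E₁₁ hE₁₁ E₁₂ hE₁₂
end

section
/- In the two-user scalar Gaussian MAC with finite-alphabet inputs, for every g₂ > 0 the map g₂ ↦ I(g₁, g₂) is differentiable and its derivative satisfies ∂I/∂g₂ = snr·(b²·g₂·E₂₂ + a·b·g₁·E₁₂), where E₂₂ and E₁₂ are evaluated at amplitudes (g₁, g₂). -/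
/-!
Put `κ = ι₁ × ι₂`, `w (i, j) = p₁ i p₂ j` and `c (i, j) = √snr (a g₁ v₁ i + b g₂ v₂ j)`: the output
density is the Gaussian mixture `p = ∑ₖ wₖ φ(y - cₖ)`, whose means move affinely with the gain,
`c = α + g₂ • β` with `β (i, j) = √snr b v₂ j`. As `∫ φ(y - cₖ) log φ(y - cₖ)` does not depend on
`cₖ`, `I = const - ∫ p log p`, so `∂I/∂g₂ = -∫ (∂p/∂g₂) (log p + 1)` by dominated differentiation
(every integrand is a polynomial times a Gaussian). Here `∂p/∂g₂ = ∑ₖ wₖ βₖ (y - cₖ) φ(y - cₖ)`,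
and Stein's lemma `∫ (y - c) φ(y - c) f = ∫ φ(y - c) f'`, applied to `f = 1` and to `f = log p + 1`
(whose derivative is `E[c | y] - y`), turns this into `∫ p · Cov(c, β | y)`. Expanding the
covariance bilinearly in `c = √snr (a g₁ x₁ + b g₂ x₂)` and `β = √snr b x₂` gives
`snr (b² g₂ E₂₂ + a b g₁ E₁₂)`.
-/

open MeasureTheory Finset

noncomputable section

namespace GaussianMixture

open Real

def stdGaussianPDF (t : ℝ) : ℝ := (√(2 * π))⁻¹ * exp (-t ^ 2 / 2)

local notation "φ" => stdGaussianPDF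

lemma stdGaussianPDF_pos (t : ℝ) : 0 < φ t := by
  unfold stdGaussianPDF; positivity

@[fun_prop]
lemma continuous_stdGaussianPDF : Continuous φ := by
  unfold stdGaussianPDF; fun_prop

lemma inv_sqrt_two_pi_le_one : (√(2 * π))⁻¹ ≤ 1 :=
  inv_le_one_of_one_le₀ (one_le_sqrt.mpr (by nlinarith [pi_gt_three]))

lemma stdGaussianPDF_le_one (t : ℝ) : φ t ≤ 1 := by
  unfold stdGaussianPDF
  exact mul_le_one₀ inv_sqrt_two_pi_le_one (exp_pos _).le
    (exp_le_one_iff.mpr (by nlinarith [sq_nonneg t]))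

lemma hasDerivAt_stdGaussianPDF (t : ℝ) : HasDerivAt φ (-t * φ t) t := by
  have h : HasDerivAt (fun t : ℝ => -t ^ 2 / 2) (-t) t :=
    ((hasDerivAt_pow 2 t).neg.div_const 2).congr_deriv (by norm_num; ring)
  exact (h.exp.const_mul _).congr_deriv (by unfold stdGaussianPDF; ring)

lemma log_stdGaussianPDF (t : ℝ) : log (φ t) = -log √(2 * π) - t ^ 2 / 2 := by
  unfold stdGaussianPDF
  rw [log_mul (by positivity) (exp_pos _).ne', log_inv, log_exp]
  ring

lemma stdGaussianPDF_sub_le (c y : ℝ) : φ (y - c) ≤ exp (c ^ 2 / 2) * exp (-y ^ 2 / 4) := by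
  rw [← exp_add]
  calc φ (y - c) ≤ 1 * exp (-(y - c) ^ 2 / 2) :=
        mul_le_mul_of_nonneg_right inv_sqrt_two_pi_le_one (exp_pos _).le
    _ ≤ exp (c ^ 2 / 2 + -y ^ 2 / 4) := by
        rw [one_mul, exp_le_exp]; nlinarith [sq_nonneg (y - 2 * c)]

lemma integrable_one_add_abs_pow_mul_exp (n : ℕ) :
    Integrable (fun y : ℝ => (1 + |y|) ^ n * exp (-y ^ 2 / 4)) := by
  refine ((integrable_exp_neg_mul_sq (by norm_num : (0 : ℝ) < 1 / 8)).const_mul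
    (exp (2 * n ^ 2))).mono' (by fun_prop) (ae_of_all _ fun y => ?_)
  have hpow : (1 + |y|) ^ n ≤ exp (n * |y|) := by
    rw [exp_nat_mul]
    exact pow_le_pow_left₀ (by positivity) (by linarith [add_one_le_exp |y|]) n
  rw [norm_of_nonneg (by positivity), ← exp_add]
  calc (1 + |y|) ^ n * exp (-y ^ 2 / 4) ≤ exp (n * |y|) * exp (-y ^ 2 / 4) :=
        mul_le_mul_of_nonneg_right hpow (exp_pos _).le
    _ ≤ exp (2 * n ^ 2 + -(1 / 8) * y ^ 2) := by
        rw [← exp_add, exp_le_exp]; nlinarith [sq_nonneg (|y| - 4 * n), sq_abs y]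

def PolyGrowth (f : ℝ → ℝ) : Prop := ∃ C : ℝ, ∃ n : ℕ, ∀ y, |f y| ≤ C * (1 + |y|) ^ n

namespace PolyGrowth

lemma const (a : ℝ) : PolyGrowth fun _ => a := ⟨|a|, 0, fun _ => by simp⟩

lemma id : PolyGrowth fun y => y := ⟨1, 1, fun y => by simp⟩

lemma of_bounded {f : ℝ → ℝ} {C : ℝ} (hf : ∀ y, |f y| ≤ C) : PolyGrowth f :=
  ⟨C, 0, fun y => by simpa using hf y⟩

lemma abs {f : ℝ → ℝ} (hf : PolyGrowth f) : PolyGrowth fun y => |f y| := by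
  simpa only [PolyGrowth, abs_abs] using hf

lemma add {f g : ℝ → ℝ} (hf : PolyGrowth f) (hg : PolyGrowth g) :
    PolyGrowth fun y => f y + g y := by
  obtain ⟨C, n, hC⟩ := hf
  obtain ⟨D, m, hD⟩ := hg
  refine ⟨C + D, n + m, fun y => ?_⟩
  have h1 : (1 : ℝ) ≤ 1 + |y| := by linarith [abs_nonneg y]
  have hn := pow_le_pow_right₀ h1 (Nat.le_add_right n m)
  have hm := pow_le_pow_right₀ h1 (Nat.le_add_left m n)
  have hC0 : 0 ≤ C := by simpa using (abs_nonneg _).trans (hC 0)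
  have hD0 : 0 ≤ D := by simpa using (abs_nonneg _).trans (hD 0)
  calc |f y + g y| ≤ C * (1 + |y|) ^ n + D * (1 + |y|) ^ m :=
        (abs_add_le _ _).trans (add_le_add (hC y) (hD y))
    _ ≤ (C + D) * (1 + |y|) ^ (n + m) := by
        rw [add_mul]
        exact add_le_add (mul_le_mul_of_nonneg_left hn hC0) (mul_le_mul_of_nonneg_left hm hD0)

lemma mul {f g : ℝ → ℝ} (hf : PolyGrowth f) (hg : PolyGrowth g) :
    PolyGrowth fun y => f y * g y := by
  obtain ⟨C, n, hC⟩ := hf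
  obtain ⟨D, m, hD⟩ := hg
  refine ⟨C * D, n + m, fun y => ?_⟩
  rw [abs_mul, pow_add, mul_mul_mul_comm]
  exact mul_le_mul (hC y) (hD y) (abs_nonneg _) ((abs_nonneg _).trans (hC y))

lemma sub {f g : ℝ → ℝ} (hf : PolyGrowth f) (hg : PolyGrowth g) :
    PolyGrowth fun y => f y - g y := by
  simpa only [sub_eq_add_neg, neg_one_mul] using hf.add ((const (-1)).mul hg)

end PolyGrowth

lemma integrable_stdGaussianPDF_sub_mul (c : ℝ) {h : ℝ → ℝ} (hh : Continuous h)
    (hg : PolyGrowth h) : Integrable fun y => φ (y - c) * h y := by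
  obtain ⟨C, n, hC⟩ := hg
  refine ((integrable_one_add_abs_pow_mul_exp n).const_mul (exp (c ^ 2 / 2) * C)).mono'
    (by fun_prop) (ae_of_all _ fun y => ?_)
  rw [norm_eq_abs, abs_mul, abs_of_pos (stdGaussianPDF_pos _)]
  calc φ (y - c) * |h y| ≤ (exp (c ^ 2 / 2) * exp (-y ^ 2 / 4)) * (C * (1 + |y|) ^ n) :=
        mul_le_mul (stdGaussianPDF_sub_le c y) (hC y) (abs_nonneg _) (by positivity)
    _ = exp (c ^ 2 / 2) * C * ((1 + |y|) ^ n * exp (-y ^ 2 / 4)) := by ring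

lemma integral_sub_mul_stdGaussianPDF_sub_mul (c : ℝ) {f f' : ℝ → ℝ}
    (hf : ∀ y, HasDerivAt f (f' y) y) (hf' : Continuous f') (hfg : PolyGrowth f)
    (hf'g : PolyGrowth f') :
    ∫ y, (y - c) * φ (y - c) * f y = ∫ y, φ (y - c) * f' y := by
  have hfc : Continuous f := continuous_iff_continuousAt.mpr fun y => (hf y).continuousAt
  have hu : ∀ y, HasDerivAt (fun y => φ (y - c)) ((c - y) * φ (y - c)) y := fun y =>
    ((hasDerivAt_stdGaussianPDF _).comp y ((hasDerivAt_id y).sub_const c)).congr_deriv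
      (by simp only [id]; ring)
  have hu'v : Integrable fun y => (c - y) * φ (y - c) * f y := by
    refine (integrable_stdGaussianPDF_sub_mul c (h := fun y => (c - y) * f y) (by fun_prop)
      (((PolyGrowth.const c).sub PolyGrowth.id).mul hfg)).congr (ae_of_all _ fun y => ?_)
    ring
  rw [integral_mul_deriv_eq_deriv_mul_of_integrable (fun y _ => hu y) (fun y _ => hf y)
    (integrable_stdGaussianPDF_sub_mul c hf' hf'g) hu'v
    (integrable_stdGaussianPDF_sub_mul c hfc hfg), ← integral_neg]
  congr 1 with y
  ring

section Mixture

variable {κ : Type*} [Fintype κ] (w : κ → ℝ)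

def mixPDF (c : κ → ℝ) (y : ℝ) : ℝ := ∑ k, w k * φ (y - c k)

def postMean (c f : κ → ℝ) (y : ℝ) : ℝ := (∑ k, f k * (w k * φ (y - c k))) / mixPDF w c y

/-- `∂/∂g` of `mixPDF w (α + g • β) y`, at `c = α + g • β`. -/
def mixPDFDirDeriv (c β : κ → ℝ) (y : ℝ) : ℝ := ∑ k, β k * (y - c k) * (w k * φ (y - c k))

def mutualInfo (c : κ → ℝ) : ℝ :=
  ∫ y, ∑ k, w k * φ (y - c k) * log (φ (y - c k) / mixPDF w c y)

/-- The entries `E[(f - E[f | y]) (h - E[h | y])]` of the MMSE matrix. -/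
def mmseCov (c f h : κ → ℝ) : ℝ :=
  ∫ y, ∑ k, w k * φ (y - c k) * ((f k - postMean w c f y) * (h k - postMean w c h y))

lemma abs_le_sum_abs (c : κ → ℝ) (k : κ) : |c k| ≤ ∑ j, |c j| :=
  single_le_sum (fun j _ => abs_nonneg (c j)) (mem_univ k)

@[fun_prop]
lemma continuous_mixPDF (c : κ → ℝ) : Continuous (mixPDF w c) := by
  unfold mixPDF; fun_prop

@[fun_prop]
lemma continuous_mixPDFDirDeriv (c β : κ → ℝ) : Continuous (mixPDFDirDeriv w c β) := by
  unfold mixPDFDirDeriv; fun_prop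

lemma mixPDF_pos [Nonempty κ] (hw : ∀ k, 0 < w k) (c : κ → ℝ) (y : ℝ) : 0 < mixPDF w c y :=
  sum_pos (fun k _ => mul_pos (hw k) (stdGaussianPDF_pos _)) univ_nonempty

lemma continuous_postMean [Nonempty κ] (hw : ∀ k, 0 < w k) (c f : κ → ℝ) :
    Continuous (postMean w c f) :=
  (continuous_finsetSum _ fun k _ => by fun_prop).div (continuous_mixPDF w c)
    fun y => (mixPDF_pos w hw c y).ne'

lemma continuous_log_mixPDF [Nonempty κ] (hw : ∀ k, 0 < w k) (c : κ → ℝ) :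
    Continuous fun y => log (mixPDF w c y) :=
  (continuous_mixPDF w c).log fun y => (mixPDF_pos w hw c y).ne'

lemma abs_sum_mul_le_mixPDF_mul (hw : ∀ k, 0 ≤ w k) (c : κ → ℝ) {f : κ → ℝ} {D : ℝ}
    (hf : ∀ k, |f k| ≤ D) (y : ℝ) :
    |∑ k, f k * (w k * φ (y - c k))| ≤ mixPDF w c y * D := by
  rw [mixPDF, sum_mul]
  refine (abs_sum_le_sum_abs _ _).trans (sum_le_sum fun k _ => ?_)
  have hu : 0 ≤ w k * φ (y - c k) := mul_nonneg (hw k) (stdGaussianPDF_pos _).le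
  rw [abs_mul, abs_of_nonneg hu, mul_comm]
  exact mul_le_mul_of_nonneg_left (hf k) hu

lemma abs_postMean_le [Nonempty κ] (hw : ∀ k, 0 < w k) (c : κ → ℝ) {f : κ → ℝ} {D : ℝ}
    (hf : ∀ k, |f k| ≤ D) (y : ℝ) : |postMean w c f y| ≤ D := by
  have hp := mixPDF_pos w hw c y
  rw [postMean, abs_div, abs_of_pos hp, div_le_iff₀ hp, mul_comm]
  exact abs_sum_mul_le_mixPDF_mul w (fun k => (hw k).le) c hf y

lemma abs_mixPDFDirDeriv_le (hw : ∀ k, 0 ≤ w k) {c β : κ → ℝ} {M B : ℝ}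
    (hc : ∀ k, |c k| ≤ M) (hβ : ∀ k, |β k| ≤ B) (y : ℝ) :
    |mixPDFDirDeriv w c β y| ≤ mixPDF w c y * (B * (|y| + M)) := by
  refine abs_sum_mul_le_mixPDF_mul w hw c (fun k => ?_) y
  rw [abs_mul]
  exact mul_le_mul (hβ k) ((abs_sub _ _).trans (by linarith [hc k])) (abs_nonneg _)
    ((abs_nonneg _).trans (hβ k))

lemma mixPDF_le (hw : ∀ k, 0 ≤ w k) {c : κ → ℝ} {M : ℝ} (hc : ∀ k, |c k| ≤ M) (y : ℝ) :
    mixPDF w c y ≤ (∑ k, w k) * exp (M ^ 2 / 2) * exp (-y ^ 2 / 4) := by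
  rw [mixPDF, sum_mul, sum_mul]
  refine sum_le_sum fun k _ => ?_
  have hsq : c k ^ 2 ≤ M ^ 2 := by
    rw [← sq_abs]; exact pow_le_pow_left₀ (abs_nonneg _) (hc k) 2
  rw [mul_assoc]
  refine mul_le_mul_of_nonneg_left ((stdGaussianPDF_sub_le (c k) y).trans ?_) (hw k)
  gcongr

lemma integrable_mixPDF_mul (c : κ → ℝ) {h : ℝ → ℝ} (hh : Continuous h) (hg : PolyGrowth h) :
    Integrable fun y => mixPDF w c y * h y := by
  simp only [mixPDF, sum_mul, mul_assoc]
  exact integrable_finsetSum _ fun k _ =>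
    (integrable_stdGaussianPDF_sub_mul (c k) hh hg).const_mul (w k)

lemma hasDerivAt_mixPDF (c : κ → ℝ) (y : ℝ) :
    HasDerivAt (mixPDF w c) (∑ k, (c k - y) * (w k * φ (y - c k))) y := by
  refine HasDerivAt.fun_sum fun k _ => ?_
  exact (((hasDerivAt_stdGaussianPDF _).comp y ((hasDerivAt_id y).sub_const (c k))).const_mul
    (w k)).congr_deriv (by simp only [id]; ring)

lemma hasDerivAt_log_mixPDF [Nonempty κ] (hw : ∀ k, 0 < w k) (c : κ → ℝ) (y : ℝ) :
    HasDerivAt (fun y => log (mixPDF w c y)) (postMean w c c y - y) y := by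
  have hp := (mixPDF_pos w hw c y).ne'
  refine ((hasDerivAt_mixPDF w c y).log hp).congr_deriv ?_
  have hsum : ∑ k, (c k - y) * (w k * φ (y - c k))
      = ∑ k, c k * (w k * φ (y - c k)) - y * mixPDF w c y := by
    simp only [sub_mul, sum_sub_distrib, mixPDF, mul_sum]
  rw [hsum, postMean, sub_div, mul_div_cancel_right₀ _ hp]

lemma hasDerivAt_mixPDF_add_smul (α β : κ → ℝ) (y g : ℝ) :
    HasDerivAt (fun g => mixPDF w (α + g • β) y) (mixPDFDirDeriv w (α + g • β) β y) g := by
  refine HasDerivAt.fun_sum fun k _ => ?_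
  have hmean : HasDerivAt (fun g => y - (α k + g * β k)) (-β k) g := by
    simpa using (((hasDerivAt_id g).mul_const (β k)).const_add (α k)).const_sub y
  exact (((hasDerivAt_stdGaussianPDF _).comp g hmean).const_mul (w k)).congr_deriv
    (by simp only [Pi.add_apply, Pi.smul_apply, smul_eq_mul]; ring)

lemma exists_abs_log_mixPDF_le [Nonempty κ] (hw : ∀ k, 0 < w k) (M : ℝ) :
    ∃ C, ∀ c : κ → ℝ, (∀ k, |c k| ≤ M) → ∀ y, |log (mixPDF w c y)| ≤ C * (1 + |y|) ^ 2 := by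
  obtain ⟨k₀⟩ := ‹Nonempty κ›
  set A := |log (w k₀) - log √(2 * π)|
  set W := ∑ k, w k
  refine ⟨A + W + (1 + |M|) ^ 2, fun c hc y => ?_⟩
  have hp := mixPDF_pos w hw c y
  have hW : 0 ≤ W := sum_nonneg fun k _ => (hw k).le
  have hupper : log (mixPDF w c y) ≤ W := by
    refine (log_le_sub_one_of_pos hp).trans ?_
    have : mixPDF w c y ≤ W := sum_le_sum fun k _ =>
      mul_le_of_le_one_right (hw k).le (stdGaussianPDF_le_one _)
    linarith
  have hlower : log (w k₀) - log √(2 * π) - (y - c k₀) ^ 2 / 2 ≤ log (mixPDF w c y) := by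
    have hle : w k₀ * φ (y - c k₀) ≤ mixPDF w c y :=
      single_le_sum (f := fun k => w k * φ (y - c k))
        (fun k _ => (mul_pos (hw k) (stdGaussianPDF_pos _)).le) (mem_univ k₀)
    have := log_le_log (mul_pos (hw k₀) (stdGaussianPDF_pos _)) hle
    rw [log_mul (hw k₀).ne' (stdGaussianPDF_pos _).ne', log_stdGaussianPDF] at this
    linarith
  have hsq : (y - c k₀) ^ 2 ≤ (1 + |M|) ^ 2 * (1 + |y|) ^ 2 := by
    rw [← mul_pow, ← sq_abs]
    refine pow_le_pow_left₀ (abs_nonneg _) ((abs_sub _ _).trans ?_) 2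
    nlinarith [hc k₀, le_abs_self M, abs_nonneg y, abs_nonneg M]
  have hX : 1 ≤ (1 + |y|) ^ 2 := one_le_pow₀ (by linarith [abs_nonneg y])
  have hA : A ≤ A * (1 + |y|) ^ 2 := le_mul_of_one_le_right (abs_nonneg _) hX
  have hWX : W ≤ W * (1 + |y|) ^ 2 := le_mul_of_one_le_right hW hX
  have hAX : 0 ≤ A * (1 + |y|) ^ 2 := by positivity
  have hMX : 0 ≤ (1 + |M|) ^ 2 * (1 + |y|) ^ 2 := by positivity
  have hA' : -A ≤ log (w k₀) - log √(2 * π) := neg_abs_le _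
  rw [abs_le]
  constructor <;> nlinarith

lemma polyGrowth_log_mixPDF [Nonempty κ] (hw : ∀ k, 0 < w k) (c : κ → ℝ) :
    PolyGrowth fun y => log (mixPDF w c y) :=
  let ⟨C, hC⟩ := exists_abs_log_mixPDF_le w hw (∑ k, |c k|)
  ⟨C, 2, hC c (abs_le_sum_abs c)⟩

lemma integral_mixPDFDirDeriv_mul (c β : κ → ℝ) {f f' : ℝ → ℝ}
    (hf : ∀ y, HasDerivAt f (f' y) y) (hf' : Continuous f') (hfg : PolyGrowth f)
    (hf'g : PolyGrowth f') :
    ∫ y, mixPDFDirDeriv w c β y * f y = ∫ y, (∑ k, β k * (w k * φ (y - c k))) * f' y := by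
  have hfc : Continuous f := continuous_iff_continuousAt.mpr fun y => (hf y).continuousAt
  have hlhs : ∀ y, mixPDFDirDeriv w c β y * f y
      = ∑ k, β k * w k * (φ (y - c k) * ((y - c k) * f y)) := fun y => by
    rw [mixPDFDirDeriv, sum_mul]; exact sum_congr rfl fun k _ => by ring
  have hrhs : ∀ y, (∑ k, β k * (w k * φ (y - c k))) * f' y
      = ∑ k, β k * w k * (φ (y - c k) * f' y) := fun y => by
    rw [sum_mul]; exact sum_congr rfl fun k _ => by ring
  simp_rw [hlhs, hrhs]
  rw [integral_finsetSum _ fun k _ => (integrable_stdGaussianPDF_sub_mul (c k) (by fun_prop)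
      ((PolyGrowth.id.sub (PolyGrowth.const _)).mul hfg)).const_mul _,
    integral_finsetSum _ fun k _ => (integrable_stdGaussianPDF_sub_mul (c k) hf' hf'g).const_mul _]
  refine sum_congr rfl fun k _ => ?_
  rw [integral_const_mul, integral_const_mul, ← integral_sub_mul_stdGaussianPDF_sub_mul (c k) hf hf'
    hfg hf'g]
  simp only [mul_assoc, mul_left_comm (φ _)]

lemma sum_mul_sub_postMean_mul_sub_postMean [Nonempty κ] (hw : ∀ k, 0 < w k) (c β : κ → ℝ)
    (y : ℝ) :
    ∑ k, w k * φ (y - c k) * ((c k - postMean w c c y) * (β k - postMean w c β y))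
      = (∑ k, β k * (w k * φ (y - c k))) * (y - postMean w c c y) - mixPDFDirDeriv w c β y := by
  have hcentered : ∑ k, w k * φ (y - c k) * (c k - postMean w c c y) = 0 := by
    have : ∑ k, w k * φ (y - c k) * (c k - postMean w c c y)
        = ∑ k, c k * (w k * φ (y - c k)) - mixPDF w c y * postMean w c c y := by
      rw [mixPDF, sum_mul, ← sum_sub_distrib]; exact sum_congr rfl fun k _ => by ring
    rw [this, postMean, mul_div_cancel₀ _ (mixPDF_pos w hw c y).ne', sub_self]
  calc _ = ∑ k, (β k * (w k * φ (y - c k)) * (y - postMean w c c y)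
          - β k * (y - c k) * (w k * φ (y - c k)))
        - postMean w c β y * ∑ k, w k * φ (y - c k) * (c k - postMean w c c y) := by
        rw [mul_sum, ← sum_sub_distrib]; exact sum_congr rfl fun k _ => by ring
    _ = _ := by rw [hcentered, mul_zero, sub_zero, sum_sub_distrib, ← sum_mul]; rfl

lemma mmseCov_self_eq [Nonempty κ] (hw : ∀ k, 0 < w k) (c β : κ → ℝ) :
    mmseCov w c c β = -∫ y, mixPDFDirDeriv w c β y * (log (mixPDF w c y) + 1) := by
  have hcont := continuous_postMean w hw c c
  have hmeang : PolyGrowth fun y => postMean w c c y - y :=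
    (PolyGrowth.of_bounded (abs_postMean_le w hw c (abs_le_sum_abs c))).sub PolyGrowth.id
  have hstein := integral_mixPDFDirDeriv_mul w c β
    (fun y => (hasDerivAt_log_mixPDF w hw c y).add_const 1) (by fun_prop)
    ((polyGrowth_log_mixPDF w hw c).add (PolyGrowth.const 1)) hmeang
  have hzero : ∫ y, mixPDFDirDeriv w c β y = 0 := by
    simpa using integral_mixPDFDirDeriv_mul w c β (fun y => hasDerivAt_const y (1 : ℝ))
      continuous_const (PolyGrowth.const 1) (PolyGrowth.const 0)
  set M := ∑ k, |c k|
  set B := ∑ k, |β k|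
  have hdom := integrable_mixPDF_mul w c (h := fun y => B * (|y| + M)) (by fun_prop)
    ((PolyGrowth.const B).mul (PolyGrowth.id.abs.add (PolyGrowth.const M)))
  have hint₁ : Integrable fun y => (∑ k, β k * (w k * φ (y - c k))) * (y - postMean w c c y) := by
    refine hdom.mono' (by fun_prop) (ae_of_all _ fun y => ?_)
    have hN := abs_sum_mul_le_mixPDF_mul w (fun k => (hw k).le) c (abs_le_sum_abs β) y
    have hm : |y - postMean w c c y| ≤ |y| + M :=
      (abs_sub _ _).trans (add_le_add_right (abs_postMean_le w hw c (abs_le_sum_abs c) y) _)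
    rw [norm_eq_abs, abs_mul, ← mul_assoc]
    exact mul_le_mul hN hm (abs_nonneg _)
      (mul_nonneg (mixPDF_pos w hw c y).le (sum_nonneg fun k _ => abs_nonneg _))
  have hint₂ : Integrable (mixPDFDirDeriv w c β) :=
    hdom.mono' (by fun_prop) (ae_of_all _ fun y =>
      abs_mixPDFDirDeriv_le w (fun k => (hw k).le) (abs_le_sum_abs c) (abs_le_sum_abs β) y)
  calc mmseCov w c c β
      = ∫ y, ((∑ k, β k * (w k * φ (y - c k))) * (y - postMean w c c y)
          - mixPDFDirDeriv w c β y) := by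
        unfold mmseCov; simp_rw [sum_mul_sub_postMean_mul_sub_postMean w hw]
    _ = -∫ y, (∑ k, β k * (w k * φ (y - c k))) * (postMean w c c y - y) := by
        rw [integral_sub hint₁ hint₂, hzero, sub_zero, ← integral_neg]
        congr with y; ring
    _ = _ := by rw [hstein]

lemma integrable_stdGaussianPDF_mul_log : Integrable fun t => φ t * log (φ t) := by
  refine (integrable_stdGaussianPDF_sub_mul 0 (h := fun t => -log √(2 * π) - t * t * (1 / 2))
    (by fun_prop) ((PolyGrowth.const _).sub ((PolyGrowth.id.mul PolyGrowth.id).mul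
      (PolyGrowth.const _)))).congr (ae_of_all _ fun t => ?_)
  simp only [sub_zero, log_stdGaussianPDF]
  ring

lemma mutualInfo_eq [Nonempty κ] (hw : ∀ k, 0 < w k) (c : κ → ℝ) :
    mutualInfo w c = (∑ k, w k) * (∫ t, φ t * log (φ t))
      - ∫ y, mixPDF w c y * log (mixPDF w c y) := by
  have hsplit : ∀ y, ∑ k, w k * φ (y - c k) * log (φ (y - c k) / mixPDF w c y)
      = ∑ k, w k * (φ (y - c k) * log (φ (y - c k))) - mixPDF w c y * log (mixPDF w c y) :=
    fun y => by
      calc _ = ∑ k, (w k * (φ (y - c k) * log (φ (y - c k)))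
              - w k * φ (y - c k) * log (mixPDF w c y)) :=
            sum_congr rfl fun k _ => by
              rw [log_div (stdGaussianPDF_pos _).ne' (mixPDF_pos w hw c y).ne']; ring
        _ = _ := by rw [sum_sub_distrib, ← sum_mul]; rfl
  have hint : ∀ k, Integrable fun y => w k * (φ (y - c k) * log (φ (y - c k))) := fun k =>
    (integrable_stdGaussianPDF_mul_log.comp_sub_right (c k)).const_mul (w k)
  rw [mutualInfo]
  simp_rw [hsplit]
  rw [integral_sub (integrable_finsetSum _ fun k _ => hint k)
    (integrable_mixPDF_mul w c (continuous_log_mixPDF w hw c) (polyGrowth_log_mixPDF w hw c)),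
    integral_finsetSum _ fun k _ => hint k, sum_mul]
  simp only [integral_const_mul, integral_sub_right_eq_self (fun t => φ t * log (φ t))]

lemma abs_add_smul_apply_le (α β : κ → ℝ) {g g₀ : ℝ} (hg : g ∈ Metric.ball g₀ 1) (k : κ) :
    |(α + g • β) k| ≤ ∑ j, (|α j| + (|g₀| + 1) * |β j|) := by
  have hg' : |g| ≤ |g₀| + 1 := by
    rw [Metric.mem_ball, Real.dist_eq] at hg
    linarith [abs_sub_abs_le_abs_sub g g₀]
  refine le_trans ?_ (single_le_sum (f := fun j => |α j| + (|g₀| + 1) * |β j|)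
    (fun j _ => by positivity) (mem_univ k))
  simp only [Pi.add_apply, Pi.smul_apply, smul_eq_mul]
  refine (abs_add_le _ _).trans (add_le_add_right ?_ _)
  rw [abs_mul]
  exact mul_le_mul_of_nonneg_right hg' (abs_nonneg _)

lemma abs_mixPDFDirDeriv_mul_log_add_one_le (hw : ∀ k, 0 ≤ w k) (β : κ → ℝ) {c : κ → ℝ} {M C : ℝ}
    (hM : 0 ≤ M) (hc : ∀ k, |c k| ≤ M) (y : ℝ)
    (hlog : |log (mixPDF w c y)| ≤ C * (1 + |y|) ^ 2) :
    |mixPDFDirDeriv w c β y * (log (mixPDF w c y) + 1)|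
      ≤ (∑ k, |β k|) * (1 + M) * (C + 1) * ((∑ k, w k) * exp (M ^ 2 / 2))
        * ((1 + |y|) ^ 3 * exp (-y ^ 2 / 4)) := by
  have hD := abs_mixPDFDirDeriv_le w hw hc (abs_le_sum_abs β) y
  have hL : |log (mixPDF w c y) + 1| ≤ (C + 1) * (1 + |y|) ^ 2 := by
    have hX : 1 ≤ (1 + |y|) ^ 2 := one_le_pow₀ (by linarith [abs_nonneg y])
    linarith [abs_add_le (log (mixPDF w c y)) 1, abs_one (α := ℝ)]
  have hL0 : 0 ≤ (C + 1) * (1 + |y|) ^ 2 := (abs_nonneg _).trans hL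
  have hy : |y| + M ≤ (1 + M) * (1 + |y|) := by nlinarith [abs_nonneg y]
  have hW : 0 ≤ (∑ k, w k) * exp (M ^ 2 / 2) * exp (-y ^ 2 / 4) :=
    mul_nonneg (mul_nonneg (sum_nonneg fun k _ => hw k) (exp_pos _).le) (exp_pos _).le
  have hp := mixPDF_le w hw hc y
  rw [abs_mul]
  calc _ ≤ mixPDF w c y * ((∑ k, |β k|) * (|y| + M)) * ((C + 1) * (1 + |y|) ^ 2) :=
        mul_le_mul hD hL (abs_nonneg _) ((abs_nonneg _).trans hD)
    _ ≤ ((∑ k, w k) * exp (M ^ 2 / 2) * exp (-y ^ 2 / 4)) * ((∑ k, |β k|) * ((1 + M) * (1 + |y|)))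
          * ((C + 1) * (1 + |y|) ^ 2) := by gcongr
    _ = _ := by ring

lemma hasDerivAt_integral_mixPDF_mul_log [Nonempty κ] (hw : ∀ k, 0 < w k) (α β : κ → ℝ)
    (g₀ : ℝ) :
    HasDerivAt (fun g => ∫ y, mixPDF w (α + g • β) y * log (mixPDF w (α + g • β) y))
      (∫ y, mixPDFDirDeriv w (α + g₀ • β) β y * (log (mixPDF w (α + g₀ • β) y) + 1)) g₀ := by
  have hball := fun g (hg : g ∈ Metric.ball g₀ 1) => abs_add_smul_apply_le α β hg
  obtain ⟨C, hC⟩ := exists_abs_log_mixPDF_le w hw (∑ j, (|α j| + (|g₀| + 1) * |β j|))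
  refine (hasDerivAt_integral_of_dominated_loc_of_deriv_le (Metric.ball_mem_nhds g₀ one_pos)
    (Filter.Eventually.of_forall fun g => ?_) ?_ ?_
    (ae_of_all _ fun y g hg => (norm_eq_abs _).trans_le
      (abs_mixPDFDirDeriv_mul_log_add_one_le w (fun k => (hw k).le) β (by positivity)
        (hball g hg) y (hC _ (hball g hg) y)))
    ((integrable_one_add_abs_pow_mul_exp 3).const_mul _) (ae_of_all _ fun y g _ => ?_)).2
  · exact ((continuous_mixPDF w _).mul (continuous_log_mixPDF w hw _)).aestronglyMeasurable
  · exact integrable_mixPDF_mul w _ (continuous_log_mixPDF w hw _) (polyGrowth_log_mixPDF w hw _)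
  · exact ((continuous_mixPDFDirDeriv w _ β).mul
      ((continuous_log_mixPDF w hw _).add continuous_const)).aestronglyMeasurable
  · have hp := hasDerivAt_mixPDF_add_smul w α β y g
    refine (hp.mul (hp.log (mixPDF_pos w hw _ y).ne')).congr_deriv ?_
    rw [mul_div_cancel₀ _ (mixPDF_pos w hw _ y).ne']
    ring

theorem hasDerivAt_mutualInfo [Nonempty κ] (hw : ∀ k, 0 < w k) (α β : κ → ℝ) (g₀ : ℝ) :
    HasDerivAt (fun g => mutualInfo w (α + g • β)) (mmseCov w (α + g₀ • β) (α + g₀ • β) β) g₀ := by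
  simp_rw [mmseCov_self_eq w hw, mutualInfo_eq w hw]
  exact (hasDerivAt_integral_mixPDF_mul_log w hw α β g₀).const_sub _

lemma postMean_add (c f f' : κ → ℝ) (y : ℝ) :
    postMean w c (f + f') y = postMean w c f y + postMean w c f' y := by
  simp only [postMean, Pi.add_apply, add_mul, sum_add_distrib, add_div]

lemma postMean_smul (c : κ → ℝ) (a : ℝ) (f : κ → ℝ) (y : ℝ) :
    postMean w c (a • f) y = a * postMean w c f y := by
  simp only [postMean, Pi.smul_apply, smul_eq_mul, mul_assoc, ← mul_sum, mul_div_assoc]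

lemma mmseCov_smul_left (c : κ → ℝ) (a : ℝ) (f h : κ → ℝ) :
    mmseCov w c (a • f) h = a * mmseCov w c f h := by
  simp only [mmseCov, postMean_smul, ← integral_const_mul, mul_sum, Pi.smul_apply, smul_eq_mul]
  congr with y
  exact sum_congr rfl fun k _ => by ring

lemma mmseCov_smul_right (c f : κ → ℝ) (a : ℝ) (h : κ → ℝ) :
    mmseCov w c f (a • h) = a * mmseCov w c f h := by
  simp only [mmseCov, postMean_smul, ← integral_const_mul, mul_sum, Pi.smul_apply, smul_eq_mul]
  congr with y
  exact sum_congr rfl fun k _ => by ring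

lemma integrable_mmseCov_integrand [Nonempty κ] (hw : ∀ k, 0 < w k) (c f h : κ → ℝ) :
    Integrable fun y =>
      ∑ k, w k * φ (y - c k) * ((f k - postMean w c f y) * (h k - postMean w c h y)) := by
  have hf := continuous_postMean w hw c f
  have hh := continuous_postMean w hw c h
  have hcentered : ∀ (u : κ → ℝ) y k, |u k - postMean w c u y| ≤ 2 * ∑ j, |u j| := by
    intro u y k
    have := abs_postMean_le w hw c (abs_le_sum_abs u) y
    linarith [abs_sub (u k) (postMean w c u y), abs_le_sum_abs u k]
  refine (integrable_mixPDF_mul w c continuous_const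
    (PolyGrowth.const ((2 * ∑ j, |f j|) * (2 * ∑ j, |h j|)))).mono' (by fun_prop)
    (ae_of_all _ fun y => ?_)
  have hform : ∑ k, w k * φ (y - c k) * ((f k - postMean w c f y) * (h k - postMean w c h y))
      = ∑ k, ((f k - postMean w c f y) * (h k - postMean w c h y)) * (w k * φ (y - c k)) :=
    sum_congr rfl fun k _ => by ring
  rw [norm_eq_abs, hform]
  refine abs_sum_mul_le_mixPDF_mul w (fun k => (hw k).le) c (fun k => ?_) y
  rw [abs_mul]
  exact mul_le_mul (hcentered f y k) (hcentered h y k) (abs_nonneg _)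
    ((abs_nonneg _).trans (hcentered f y k))

lemma mmseCov_add_left [Nonempty κ] (hw : ∀ k, 0 < w k) (c f f' h : κ → ℝ) :
    mmseCov w c (f + f') h = mmseCov w c f h + mmseCov w c f' h := by
  rw [mmseCov, mmseCov, mmseCov, ← integral_add (integrable_mmseCov_integrand w hw c f h)
    (integrable_mmseCov_integrand w hw c f' h)]
  congr with y
  simp only [postMean_add, Pi.add_apply, ← sum_add_distrib]
  exact sum_congr rfl fun k _ => by ring

end Mixture

end GaussianMixture

end

theorem stmt_5_general {ι₁ ι₂ : Type*} [Fintype ι₁] [Fintype ι₂]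
    (v₁ : ι₁ → ℝ) (v₂ : ι₂ → ℝ) (p₁ : ι₁ → ℝ) (p₂ : ι₂ → ℝ)
    (hp₁pos : ∀ i, 0 < p₁ i) (hp₁sum : ∑ i, p₁ i = 1)
    (hp₂pos : ∀ j, 0 < p₂ j) (hp₂sum : ∑ j, p₂ j = 1)
    (snr a b g₁ : ℝ) (hsnr : 0 < snr)
    (φ : ℝ → ℝ) (hφ : φ = fun t => (Real.sqrt (2 * Real.pi))⁻¹ * Real.exp (-t ^ 2 / 2))
    (μv : ℝ → ℝ → ι₁ → ι₂ → ℝ)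
    (hμv : μv = fun g₁ g₂ i j => Real.sqrt snr * (a * g₁ * v₁ i + b * g₂ * v₂ j))
    (py : ℝ → ℝ → ℝ → ℝ)
    (hpy : py = fun g₁ g₂ y => ∑ i, ∑ j, p₁ i * p₂ j * φ (y - μv g₁ g₂ i j))
    (I : ℝ → ℝ → ℝ)
    (hI : I = fun g₁ g₂ => ∫ y : ℝ, ∑ i, ∑ j, p₁ i * p₂ j * φ (y - μv g₁ g₂ i j) *
        Real.log (φ (y - μv g₁ g₂ i j) / py g₁ g₂ y))
    (xhat₁ : ℝ → ℝ → ℝ → ℝ)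
    (hxhat₁ : xhat₁ = fun g₁ g₂ y =>
        (∑ i, ∑ j, v₁ i * (p₁ i * p₂ j * φ (y - μv g₁ g₂ i j))) / py g₁ g₂ y)
    (xhat₂ : ℝ → ℝ → ℝ → ℝ)
    (hxhat₂ : xhat₂ = fun g₁ g₂ y =>
        (∑ i, ∑ j, v₂ j * (p₁ i * p₂ j * φ (y - μv g₁ g₂ i j))) / py g₁ g₂ y)
    (E₂₂ : ℝ → ℝ → ℝ)
    (hE₂₂ : E₂₂ = fun g₁ g₂ => ∫ y : ℝ, ∑ i, ∑ j, p₁ i * p₂ j * φ (y - μv g₁ g₂ i j) *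
        (v₂ j - xhat₂ g₁ g₂ y) ^ 2)
    (E₁₂ : ℝ → ℝ → ℝ)
    (hE₁₂ : E₁₂ = fun g₁ g₂ => ∫ y : ℝ, ∑ i, ∑ j, p₁ i * p₂ j * φ (y - μv g₁ g₂ i j) *
        ((v₁ i - xhat₁ g₁ g₂ y) * (v₂ j - xhat₂ g₁ g₂ y))) :
    ∀ g₂ : ℝ, 0 < g₂ →
      HasDerivAt (fun g => I g₁ g)
        (snr * (b ^ 2 * g₂ * E₂₂ g₁ g₂ + a * b * g₁ * E₁₂ g₁ g₂)) g₂ := by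
  open GaussianMixture in
  · intro g₂ _
    subst hφ hpy hxhat₁ hxhat₂
    have : Nonempty ι₁ := univ_nonempty_iff.mp (nonempty_of_sum_ne_zero (hp₁sum ▸ one_ne_zero))
    have : Nonempty ι₂ := univ_nonempty_iff.mp (nonempty_of_sum_ne_zero (hp₂sum ▸ one_ne_zero))
    set w : ι₁ × ι₂ → ℝ := fun k => p₁ k.1 * p₂ k.2
    set V₁ : ι₁ × ι₂ → ℝ := fun k => v₁ k.1
    set V₂ : ι₁ × ι₂ → ℝ := fun k => v₂ k.2
    set c : ℝ → ι₁ × ι₂ → ℝ := fun g k => μv g₁ g k.1 k.2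
    have hw : ∀ k, 0 < w k := fun k => mul_pos (hp₁pos _) (hp₂pos _)
    have hc : ∀ g, c g = (√snr * a * g₁) • V₁ + g • (√snr * b) • V₂ := fun g => by
      funext k; simp only [c, hμv, V₁, V₂, Pi.add_apply, Pi.smul_apply, smul_eq_mul]; ring
    have hI' : ∀ g, I g₁ g = mutualInfo w (c g) := fun g => by
      simp only [hI, mutualInfo, mixPDF, stdGaussianPDF, Fintype.sum_prod_type, w, c]
    have hE₂₂' : E₂₂ g₁ g₂ = mmseCov w (c g₂) V₂ V₂ := by
      simp only [hE₂₂, mmseCov, postMean, mixPDF, stdGaussianPDF, Fintype.sum_prod_type, w, c, V₂,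
        sq]
    have hE₁₂' : E₁₂ g₁ g₂ = mmseCov w (c g₂) V₁ V₂ := by
      simp only [hE₁₂, mmseCov, postMean, mixPDF, stdGaussianPDF, Fintype.sum_prod_type, w, c, V₁,
        V₂]
    have hderiv := hasDerivAt_mutualInfo w hw ((√snr * a * g₁) • V₁) ((√snr * b) • V₂) g₂
    rw [mmseCov_add_left w hw, mmseCov_smul_left, mmseCov_smul_left, mmseCov_smul_left,
      mmseCov_smul_right, mmseCov_smul_right] at hderiv
    simp only [← hc] at hderiv
    rw [funext hI', hE₂₂', hE₁₂']
    convert hderiv using 1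
    linear_combination (-(b ^ 2 * g₂ * mmseCov w (c g₂) V₂ V₂
      + a * b * g₁ * mmseCov w (c g₂) V₁ V₂)) * Real.mul_self_sqrt hsnr.le

/-- Paper's Theorem 2 (second gradient formula), real-valued convention: in the two-user scalar
Gaussian MAC with finite-alphabet inputs, for every amplitude `g₂ > 0` the mutual information
is differentiable in `g₂` with `∂I/∂g₂ = snr·(b²·g₂·E₂₂ + a·b·g₁·E₁₂)`. -/
theorem stmt_5 {ι₁ ι₂ : Type*} [Fintype ι₁] [Fintype ι₂]
    (v₁ : ι₁ → ℝ) (v₂ : ι₂ → ℝ) (p₁ : ι₁ → ℝ) (p₂ : ι₂ → ℝ)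
    (hp₁pos : ∀ i, 0 < p₁ i) (hp₁sum : ∑ i, p₁ i = 1)
    (hp₂pos : ∀ j, 0 < p₂ j) (hp₂sum : ∑ j, p₂ j = 1)
    (snr a b g₁ : ℝ) (hsnr : 0 < snr) (hg₁ : 0 ≤ g₁)
    (φ : ℝ → ℝ) (hφ : φ = fun t => (Real.sqrt (2 * Real.pi))⁻¹ * Real.exp (-t ^ 2 / 2))
    (μv : ℝ → ℝ → ι₁ → ι₂ → ℝ)
    (hμv : μv = fun g₁ g₂ i j => Real.sqrt snr * (a * g₁ * v₁ i + b * g₂ * v₂ j))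
    (py : ℝ → ℝ → ℝ → ℝ)
    (hpy : py = fun g₁ g₂ y => ∑ i, ∑ j, p₁ i * p₂ j * φ (y - μv g₁ g₂ i j))
    (I : ℝ → ℝ → ℝ)
    (hI : I = fun g₁ g₂ => ∫ y : ℝ, ∑ i, ∑ j, p₁ i * p₂ j * φ (y - μv g₁ g₂ i j) *
        Real.log (φ (y - μv g₁ g₂ i j) / py g₁ g₂ y))
    (xhat₁ : ℝ → ℝ → ℝ → ℝ)
    (hxhat₁ : xhat₁ = fun g₁ g₂ y =>
        (∑ i, ∑ j, v₁ i * (p₁ i * p₂ j * φ (y - μv g₁ g₂ i j))) / py g₁ g₂ y)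
    (xhat₂ : ℝ → ℝ → ℝ → ℝ)
    (hxhat₂ : xhat₂ = fun g₁ g₂ y =>
        (∑ i, ∑ j, v₂ j * (p₁ i * p₂ j * φ (y - μv g₁ g₂ i j))) / py g₁ g₂ y)
    (E₂₂ : ℝ → ℝ → ℝ)
    (hE₂₂ : E₂₂ = fun g₁ g₂ => ∫ y : ℝ, ∑ i, ∑ j, p₁ i * p₂ j * φ (y - μv g₁ g₂ i j) *
        (v₂ j - xhat₂ g₁ g₂ y) ^ 2)
    (E₁₂ : ℝ → ℝ → ℝ)
    (hE₁₂ : E₁₂ = fun g₁ g₂ => ∫ y : ℝ, ∑ i, ∑ j, p₁ i * p₂ j * φ (y - μv g₁ g₂ i j) *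
        ((v₁ i - xhat₁ g₁ g₂ y) * (v₂ j - xhat₂ g₁ g₂ y))) :
    ∀ g₂ : ℝ, 0 < g₂ →
      HasDerivAt (fun g => I g₁ g)
        (snr * (b ^ 2 * g₂ * E₂₂ g₁ g₂ + a * b * g₁ * E₁₂ g₁ g₂)) g₂ :=
  stmt_5_general v₁ v₂ p₁ p₂ hp₁pos hp₁sum hp₂pos hp₂sum snr a b g₁ hsnr φ hφ μv hμv py hpy I hI
    xhat₁ hxhat₁ xhat₂ hxhat₂ E₂₂ hE₂₂ E₁₂ hE₁₂
end

section
/- Let x₁ be a real random variable taking finitely many values with probability mass function p₁, let x₂ and n be independent standard real Gaussians, both independent of x₁, let snr > 0, a, b ∈ ℝ, g₁, g₂ ≥ 0, and set y = √snr·(a·g₁·x₁ + b·g₂·x₂) + n. Let φ be the standard normal density, let p_{y|x₁}(y|x₁) be the Gaussian density in y with mean √snr·a·g₁·x₁ and variance 1 + snr·b²·g₂², and let p_y(y) = Σ_{x₁} p₁(x₁)·p_{y|x₁}(y|x₁). Define I(x₁,x₂;y) = Σ_{x₁} p₁(x₁)·∫∫ φ(x₂)·φ(y − √snr(a g₁ x₁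 + b g₂ x₂))·log(φ(y − √snr(a g₁ x₁ + b g₂ x₂))/p_y(y)) dy dx₂ and I(x₁;y) = ∫ Σ_{x₁} p₁(x₁)·p_{y|x₁}(y|x₁)·log(p_{y|x₁}(y|x₁)/p_y(y)) dy. Then I(x₁,x₂;y) = I(x₁;y) + (1/2)·log(1 + snr·b²·g₂²). -/
open MeasureTheory Finset

/-!
Write `ψ μ v` for the density of `N(μ, v)` and `q` for the output density `p_y`. For a fixed
value `m` of user 1's signal, the joint term is `E[log ψ (m + cX) 1 Y] - E[log q Y]` with
`Y = m + cX + Z`, `X, Z ~ N(0, 1)` independent, and the single-user term is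
`E[log ψ m σ Y'] - E[log q Y']` with `Y' ~ N(m, σ)`, `σ = 1 + c²`. Since `m + cX + Z ~ N(m, σ)`,
the two `log q` terms coincide, and what is left is the Gaussian entropy `(log (2πv) + 1) / 2` at
`v = 1` and `v = σ`, whose difference is `(1/2) log σ`. The function `log q` is integrable under
every Gaussian because it lies between a constant and `log (p₁ j * ψ (m j) σ)`.
-/

open Real ProbabilityTheory
open scoped NNReal

lemma MeasureTheory.Integrable.integral_add_of_conv {M E : Type*} [AddMonoid M] [MeasurableSpace M]
    [MeasurableAdd₂ M] [NormedAddCommGroup E] [NormedSpace ℝ E] {μ ν : Measure M} [SFinite μ]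
    [SFinite ν] {f : M → E} (hf : Integrable f (μ ∗ ν)) :
    Integrable (fun x => ∫ y, f (x + y) ∂ν) μ :=
  ((integrable_map_measure hf.1 (by fun_prop)).mp hf).integral_prod_left

namespace ProbabilityTheory

variable {μ : ℝ} {v : ℝ≥0} {q : ℝ → ℝ}

lemma integrable_gaussianReal_iff (hv : v ≠ 0) {f : ℝ → ℝ} :
    Integrable f (gaussianReal μ v) ↔ Integrable fun x => gaussianPDFReal μ v x * f x := by
  rw [gaussianReal_of_var_ne_zero _ hv,
    integrable_withDensity_iff_integrable_smul' (measurable_gaussianPDF μ v)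
      (ae_of_all _ fun _ => gaussianPDF_lt_top)]
  simp [toReal_gaussianPDF]

lemma gaussianPDFReal_le (x : ℝ) : gaussianPDFReal μ v x ≤ (√(2 * π * v))⁻¹ := by
  refine mul_le_of_le_one_right (by positivity) (exp_le_one_iff.2 ?_)
  exact div_nonpos_of_nonpos_of_nonneg (neg_nonpos.2 (sq_nonneg _)) (by positivity)

lemma log_gaussianPDFReal (hv : v ≠ 0) (x : ℝ) :
    log (gaussianPDFReal μ v x) = -log (2 * π * v) / 2 - (x - μ) ^ 2 / (2 * v) := by
  have hv' : (0 : ℝ) < v := NNReal.coe_pos.2 (pos_iff_ne_zero.2 hv)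
  rw [gaussianPDFReal, log_mul (by positivity) (exp_pos _).ne', log_inv, log_sqrt (by positivity),
    log_exp]
  ring

lemma integrable_sq_sub_gaussianReal (a : ℝ) :
    Integrable (fun x => (x - a) ^ 2) (gaussianReal μ v) :=
  ((memLp_id_gaussianReal' 2 (by simp)).sub (memLp_const a)).integrable_sq

lemma integrable_log_gaussianPDFReal (hv : v ≠ 0) (μ' : ℝ) (v' : ℝ≥0) :
    Integrable (fun x => log (gaussianPDFReal μ v x)) (gaussianReal μ' v') := by
  simp_rw [log_gaussianPDFReal hv]
  exact (integrable_const _).sub ((integrable_sq_sub_gaussianReal μ).div_const _)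

lemma integral_log_gaussianPDFReal (hv : v ≠ 0) :
    ∫ x, log (gaussianPDFReal μ v x) ∂gaussianReal μ v = -(log (2 * π * v) + 1) / 2 := by
  have hvar : ∫ x, (x - μ) ^ 2 ∂gaussianReal μ v = v := by
    simpa [variance_eq_integral measurable_id.aemeasurable, integral_id_gaussianReal]
      using variance_id_gaussianReal (μ := μ) (v := v)
  have hv' : (0 : ℝ) < v := NNReal.coe_pos.2 (pos_iff_ne_zero.2 hv)
  simp_rw [log_gaussianPDFReal hv]
  rw [integral_sub (integrable_const _) ((integrable_sq_sub_gaussianReal μ).div_const _),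
    integral_const, integral_div, hvar]
  field_simp
  simp
  ring

lemma log_gaussianPDFReal_div (hv : v ≠ 0) (hq : ∀ x, 0 < q x) (x : ℝ) :
    log (gaussianPDFReal μ v x / q x) = log (gaussianPDFReal μ v x) - log (q x) :=
  log_div (gaussianPDFReal_pos _ _ _ hv).ne' (hq x).ne'

lemma integrable_gaussianPDFReal_mul_log_div (hv : v ≠ 0) (hq : ∀ x, 0 < q x)
    (hlogq : Integrable (fun x => log (q x)) (gaussianReal μ v)) :
    Integrable fun x => gaussianPDFReal μ v x * log (gaussianPDFReal μ v x / q x) := by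
  rw [← integrable_gaussianReal_iff hv]
  simp_rw [log_gaussianPDFReal_div hv hq]
  exact (integrable_log_gaussianPDFReal hv μ v).sub hlogq

lemma integral_gaussianPDFReal_mul_log_div (hv : v ≠ 0) (hq : ∀ x, 0 < q x)
    (hlogq : Integrable (fun x => log (q x)) (gaussianReal μ v)) :
    ∫ x, gaussianPDFReal μ v x * log (gaussianPDFReal μ v x / q x)
      = -(log (2 * π * v) + 1) / 2 - ∫ x, log (q x) ∂gaussianReal μ v := by
  rw [← integral_log_gaussianPDFReal hv,
    ← integral_sub (integrable_log_gaussianPDFReal hv μ v) hlogq,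
    integral_gaussianReal_eq_integral_smul hv]
  simp_rw [log_gaussianPDFReal_div hv hq, smul_eq_mul]

lemma integral_sum_mul_gaussianPDFReal_mul_log_div {ι : Type*} [Fintype ι] (w m : ι → ℝ)
    (hv : v ≠ 0) (hq : ∀ y, 0 < q y)
    (hlogq : ∀ i, Integrable (fun y => log (q y)) (gaussianReal (m i) v)) :
    ∫ y, ∑ i, w i * gaussianPDFReal (m i) v y * log (gaussianPDFReal (m i) v y / q y)
      = ∑ i, w i * (-(log (2 * π * v) + 1) / 2 - ∫ y, log (q y) ∂gaussianReal (m i) v) := by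
  simp_rw [mul_assoc (w _)]
  rw [integral_finsetSum _ fun i _ =>
    (integrable_gaussianPDFReal_mul_log_div hv hq (hlogq i)).const_mul _]
  simp_rw [integral_const_mul, integral_gaussianPDFReal_mul_log_div hv hq (hlogq _)]

lemma integrable_log_sum_mul_gaussianPDFReal {ι : Type*} [Fintype ι] [Nonempty ι] {w : ι → ℝ}
    (hw : ∀ i, 0 < w i) (m : ι → ℝ) (hv : v ≠ 0) (μ' : ℝ) (v' : ℝ≥0) :
    Integrable (fun x => log (∑ i, w i * gaussianPDFReal (m i) v x)) (gaussianReal μ' v') := by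
  obtain ⟨j⟩ := ‹Nonempty ι›
  have hterm : ∀ i x, 0 < w i * gaussianPDFReal (m i) v x :=
    fun i x => mul_pos (hw i) (gaussianPDFReal_pos _ _ _ hv)
  refine integrable_of_le_of_le (g₁ := fun x => log (w j) + log (gaussianPDFReal (m j) v x))
    (g₂ := fun _ => log (∑ i, w i * (√(2 * π * v))⁻¹))
    (measurable_log.comp (by fun_prop)).aestronglyMeasurable
    (ae_of_all _ fun x => ?_) (ae_of_all _ fun x => ?_)
    ((integrable_const _).add (integrable_log_gaussianPDFReal hv μ' v')) (integrable_const _)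
  · dsimp only
    rw [← log_mul (hw j).ne' (gaussianPDFReal_pos _ _ _ hv).ne']
    exact log_le_log (hterm j x) (single_le_sum (fun i _ => (hterm i x).le) (mem_univ j))
  · exact log_le_log (sum_pos (fun i _ => hterm i x) univ_nonempty)
      (sum_le_sum fun i _ => mul_le_mul_of_nonneg_left (gaussianPDFReal_le x) (hw i).le)

section Channel

variable {E : Type*} [NormedAddCommGroup E] [NormedSpace ℝ E] {f : ℝ → E} {μ₁ μ₂ c : ℝ}
  {v₁ v₂ : ℝ≥0}

lemma integral_add_left_gaussianReal (u : ℝ) :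
    ∫ y, f (u + y) ∂gaussianReal μ₂ v₂ = ∫ y, f y ∂gaussianReal (μ₂ + u) v₂ := by
  rw [← gaussianReal_map_const_add u, (measurableEmbedding_addLeft u).integral_map]

lemma integrable_integral_gaussianReal_add_mul
    (hf : Integrable f (gaussianReal (c * μ₁ + μ₂) (NNReal.mk (c ^ 2) (sq_nonneg c) * v₁ + v₂))) :
    Integrable (fun x => ∫ y, f y ∂gaussianReal (μ₂ + c * x) v₂) (gaussianReal μ₁ v₁) := by
  rw [← gaussianReal_conv_gaussianReal, ← gaussianReal_map_const_mul] at hf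
  have h := hf.integral_add_of_conv
  simp_rw [integral_add_left_gaussianReal] at h
  exact (integrable_map_measure h.1 (by fun_prop)).mp h

lemma integral_integral_gaussianReal_add_mul
    (hf : Integrable f (gaussianReal (c * μ₁ + μ₂) (NNReal.mk (c ^ 2) (sq_nonneg c) * v₁ + v₂))) :
    ∫ x, ∫ y, f y ∂gaussianReal (μ₂ + c * x) v₂ ∂gaussianReal μ₁ v₁
      = ∫ y, f y ∂gaussianReal (c * μ₁ + μ₂) (NNReal.mk (c ^ 2) (sq_nonneg c) * v₁ + v₂) := by
  rw [← gaussianReal_conv_gaussianReal, ← gaussianReal_map_const_mul] at hf ⊢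
  rw [integral_conv hf, integral_map (by fun_prop) hf.integral_add_of_conv.1]
  simp_rw [integral_add_left_gaussianReal]

lemma integral_integral_gaussianPDFReal_mul_log_div (hv₁ : v₁ ≠ 0) (hv₂ : v₂ ≠ 0)
    (hq : ∀ y, 0 < q y) (hlogq : ∀ μ v, Integrable (fun y => log (q y)) (gaussianReal μ v)) :
    ∫ x, ∫ y, gaussianPDFReal μ₁ v₁ x * gaussianPDFReal (μ₂ + c * x) v₂ y *
        log (gaussianPDFReal (μ₂ + c * x) v₂ y / q y)
      = -(log (2 * π * v₂) + 1) / 2 - ∫ y, log (q y)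
          ∂gaussianReal (c * μ₁ + μ₂) (NNReal.mk (c ^ 2) (sq_nonneg c) * v₁ + v₂) := by
  simp_rw [mul_assoc (gaussianPDFReal μ₁ v₁ _), integral_const_mul,
    integral_gaussianPDFReal_mul_log_div hv₂ hq (hlogq _ _),
    ← smul_eq_mul (gaussianPDFReal μ₁ v₁ _), ← integral_gaussianReal_eq_integral_smul hv₁]
  rw [integral_sub (integrable_const _) (integrable_integral_gaussianReal_add_mul (hlogq _ _)),
    integral_integral_gaussianReal_add_mul (hlogq _ _), integral_const, probReal_univ, one_smul]

end Channel

end ProbabilityTheory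

theorem stmt_12_general {ι : Type*} [Fintype ι]
    (v : ι → ℝ) (p₁ : ι → ℝ) (hp₁pos : ∀ i, 0 < p₁ i) (hp₁sum : ∑ i, p₁ i = 1)
    (snr a b g₁ g₂ : ℝ) (hsnr : 0 < snr)
    (φ : ℝ → ℝ) (hφ : φ = fun t => (Real.sqrt (2 * Real.pi))⁻¹ * Real.exp (-t ^ 2 / 2))
    (pyx₁ : ℝ → ι → ℝ)
    (hpyx₁ : pyx₁ = fun y i =>
        (Real.sqrt (2 * Real.pi * (1 + snr * b ^ 2 * g₂ ^ 2)))⁻¹ *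
          Real.exp (-(y - Real.sqrt snr * a * g₁ * v i) ^ 2 /
            (2 * (1 + snr * b ^ 2 * g₂ ^ 2))))
    (py : ℝ → ℝ) (hpy : py = fun y => ∑ i, p₁ i * pyx₁ y i)
    (Ijoint : ℝ)
    (hIjoint : Ijoint = ∑ i, p₁ i * ∫ x₂ : ℝ, ∫ y : ℝ,
        φ x₂ * φ (y - Real.sqrt snr * (a * g₁ * v i + b * g₂ * x₂)) *
          Real.log (φ (y - Real.sqrt snr * (a * g₁ * v i + b * g₂ * x₂)) / py y))
    (I₁ : ℝ)
    (hI₁ : I₁ = ∫ y : ℝ, ∑ i, p₁ i * pyx₁ y i * Real.log (pyx₁ y i / py y)) :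
    Ijoint = I₁ + (1 / 2) * Real.log (1 + snr * b ^ 2 * g₂ ^ 2) := by
  have : Nonempty ι := univ_nonempty_iff.1 (nonempty_of_sum_ne_zero (hp₁sum ▸ one_ne_zero))
  set c := √snr * b * g₂
  set m : ι → ℝ := fun i => √snr * a * g₁ * v i
  -- the form in which `gaussianReal_conv_gaussianReal` produces the output variance
  set σ : ℝ≥0 := NNReal.mk (c ^ 2) (sq_nonneg c) * 1 + 1
  have hσ : (σ : ℝ) = 1 + snr * b ^ 2 * g₂ ^ 2 := by
    simp [σ, c, mul_pow, sq_sqrt hsnr.le]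
    ring
  have hσ0 : σ ≠ 0 := by positivity
  have hφ₀ : φ = gaussianPDFReal 0 1 := by
    ext t
    simp [hφ, gaussianPDFReal]
  have hφ' : ∀ i x y, φ (y - √snr * (a * g₁ * v i + b * g₂ * x))
      = gaussianPDFReal (m i + c * x) 1 y := fun i x y => by
    rw [hφ₀, show √snr * (a * g₁ * v i + b * g₂ * x) = m i + c * x by ring, gaussianPDFReal_sub,
      zero_add]
  have hpyx : pyx₁ = fun y i => gaussianPDFReal (m i) σ y := by
    simp [hpyx₁, gaussianPDFReal, hσ, m]
  have hpy_pos : ∀ y, 0 < py y := fun y => hpy ▸ hpyx ▸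
    sum_pos (fun i _ => mul_pos (hp₁pos i) (gaussianPDFReal_pos _ _ _ hσ0)) univ_nonempty
  have hlog : ∀ μ v, Integrable (fun y => log (py y)) (gaussianReal μ v) := fun μ v =>
    hpy ▸ hpyx ▸ integrable_log_sum_mul_gaussianPDFReal hp₁pos m hσ0 μ v
  simp_rw [hIjoint, hI₁, hpyx, hφ', hφ₀]
  rw [integral_sum_mul_gaussianPDFReal_mul_log_div p₁ m hσ0 hpy_pos fun i => hlog _ _]
  simp_rw [integral_integral_gaussianPDFReal_mul_log_div one_ne_zero one_ne_zero hpy_pos hlog]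
  have hentropy : -(log (2 * π * (1 : ℝ≥0)) + 1) / 2
      = -(log (2 * π * σ) + 1) / 2 + 1 / 2 * log σ := by
    rw [log_mul (by positivity) (NNReal.coe_ne_zero.2 hσ0), NNReal.coe_one, mul_one]
    ring
  rw [← hσ, hentropy]
  simp only [mul_zero, zero_add, add_sub_right_comm _ (1 / 2 * log σ), mul_add, sum_add_distrib,
    ← sum_mul, hp₁sum, one_mul]
  rfl

/-- Mixed-inputs decomposition (paper's equation (56), real-valued convention): with user 1's
input finite-alphabet and user 2's input standard Gaussian, the sum mutual information equals
the interference-as-noise mutual information of the arbitrary input plus the closed-form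
Gaussian conditional rate `(1/2)·log(1 + snr·b²·g₂²)`. -/
theorem stmt_12 {ι : Type*} [Fintype ι]
    (v : ι → ℝ) (p₁ : ι → ℝ) (hp₁pos : ∀ i, 0 < p₁ i) (hp₁sum : ∑ i, p₁ i = 1)
    (snr a b g₁ g₂ : ℝ) (hsnr : 0 < snr) (hg₁ : 0 ≤ g₁) (hg₂ : 0 ≤ g₂)
    (φ : ℝ → ℝ) (hφ : φ = fun t => (Real.sqrt (2 * Real.pi))⁻¹ * Real.exp (-t ^ 2 / 2))
    (pyx₁ : ℝ → ι → ℝ)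
    (hpyx₁ : pyx₁ = fun y i =>
        (Real.sqrt (2 * Real.pi * (1 + snr * b ^ 2 * g₂ ^ 2)))⁻¹ *
          Real.exp (-(y - Real.sqrt snr * a * g₁ * v i) ^ 2 /
            (2 * (1 + snr * b ^ 2 * g₂ ^ 2))))
    (py : ℝ → ℝ) (hpy : py = fun y => ∑ i, p₁ i * pyx₁ y i)
    (Ijoint : ℝ)
    (hIjoint : Ijoint = ∑ i, p₁ i * ∫ x₂ : ℝ, ∫ y : ℝ,
        φ x₂ * φ (y - Real.sqrt snr * (a * g₁ * v i + b * g₂ * x₂)) *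
          Real.log (φ (y - Real.sqrt snr * (a * g₁ * v i + b * g₂ * x₂)) / py y))
    (I₁ : ℝ)
    (hI₁ : I₁ = ∫ y : ℝ, ∑ i, p₁ i * pyx₁ y i * Real.log (pyx₁ y i / py y)) :
    Ijoint = I₁ + (1 / 2) * Real.log (1 + snr * b ^ 2 * g₂ ^ 2) :=
  stmt_12_general v p₁ hp₁pos hp₁sum snr a b g₁ g₂ hsnr φ hφ pyx₁ hpyx₁ py hpy Ijoint hIjoint I₁ hI₁
end

section
/- Let x₁ and x₂ be independent random variables uniform on {−1,+1}, let n be a standard real Gaussian independent of (x₁,x₂), and for snr > 0 put y = √snr·(x₁ + x₂) + n. With φ the standard normal density, p_y(y) = (1/4)·Σ_{x₁,x₂∈{−1,1}} φ(y − √snr(x₁+x₂)), define I(snr) = ∫ (1/4)·Σ_{x₁,x₂} φ(y − √snr(x₁+x₂))·log(φ(y − √snr(x₁+x₂))/p_y(y)) dy. Then I(snr) → (3/2)·log 2 as snr → ∞. -/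
/-!
Write `a = √snr`. For a finite input `X` with law `p` and constellation map `w`, substitute
`u = y - a w(i)` in the `i`-th component: the log-likelihood ratio becomes `-log R(u)`, where
`R(u)` is the mixture density divided by `φ(u)`, a `p`-weighted sum of the Gaussian likelihood
ratios `exp (-d u - d² / 2)` with `d = a (w i - w j)`. As `a → ∞` the terms with `d ≠ 0` vanish,
so `R(u)` tends to `P(w(X) = w(i))`; since `R` is squeezed between that probability and
`exp (u² / 2)`, dominated convergence gives `I → H(w(X))`. For BPSK, `x₁ + x₂` is `±2` with
probability `1/4` each and `0` with probability `1/2`, so `H = (3/2) log 2`.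
-/

open MeasureTheory Finset Filter Real ProbabilityTheory Topology

lemma gaussianPDFReal_zero_one_add (u d : ℝ) :
    gaussianPDFReal 0 1 (u + d) = gaussianPDFReal 0 1 u * exp (-d * u - d ^ 2 / 2) := by
  simp only [gaussianPDFReal, NNReal.coe_one, mul_one, sub_zero, mul_assoc, ← exp_add]
  ring_nf

lemma exp_neg_mul_sub_sq_div_two_le (d u : ℝ) : exp (-d * u - d ^ 2 / 2) ≤ exp (u ^ 2 / 2) :=
  exp_le_exp.2 (by nlinarith [sq_nonneg (u + d)])

lemma tendsto_exp_neg_mul_sub_sq_div_two_atTop {c : ℝ} (hc : c ≠ 0) (u : ℝ) :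
    Tendsto (fun a => exp (-(c * a) * u - (c * a) ^ 2 / 2)) atTop (𝓝 0) := by
  have hlin : Tendsto (fun a : ℝ => -(c ^ 2 / 2) * a - c * u) atTop atBot :=
    tendsto_atBot_add_const_right _ _
      (tendsto_id.const_mul_atTop_of_neg (neg_lt_zero.2 (by positivity)))
  refine tendsto_exp_atBot.comp ((tendsto_id.atTop_mul_atBot₀ hlin).congr fun a => ?_)
  simp only [id]
  ring

lemma abs_log_le_of_le_of_le_mul_exp {x q C u : ℝ} (hq : 0 < q) (hlow : q ≤ x)
    (hup : x ≤ C * exp (u ^ 2 / 2)) : |log x| ≤ |log q| + |log C| + u ^ 2 / 2 := by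
  have hx : 0 < x := hq.trans_le hlow
  have hC : 0 < C := pos_of_mul_pos_left (hx.trans_le hup) (exp_pos _).le
  have hge : log q ≤ log x := log_le_log hq hlow
  have hle : log x ≤ log C + u ^ 2 / 2 := by
    simpa [log_mul hC.ne' (exp_pos _).ne'] using log_le_log hx hup
  rw [abs_le]
  constructor <;> linarith [neg_abs_le (log q), le_abs_self (log C), abs_nonneg (log q),
    abs_nonneg (log C), sq_nonneg u]

lemma integrable_gaussianPDFReal_mul_const_add_sq (A : ℝ) :
    Integrable (fun u => gaussianPDFReal 0 1 u * (A + u ^ 2 / 2)) := by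
  have hsq : Integrable (fun u : ℝ => u ^ 2 * exp (-(1 / 2) * u ^ 2)) := by
    simpa only [rpow_two] using
      integrable_rpow_mul_exp_neg_mul_sq (b := 1 / 2) (s := 2) (by norm_num) (by norm_num)
  refine (((integrable_gaussianPDFReal 0 1).const_mul A).add
    (hsq.const_mul ((√(2 * π))⁻¹ / 2))).congr (ae_of_all _ fun u => ?_)
  simp only [Pi.add_apply, gaussianPDFReal, NNReal.coe_one, mul_one, sub_zero]
  ring_nf

lemma norm_gaussianPDFReal_mul_log_le {x q C : ℝ} (u : ℝ) (hq : 0 < q) (hlow : q ≤ x)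
    (hup : x ≤ C * exp (u ^ 2 / 2)) :
    ‖gaussianPDFReal 0 1 u * log x‖ ≤
      gaussianPDFReal 0 1 u * (|log q| + |log C| + u ^ 2 / 2) := by
  rw [norm_mul, Real.norm_of_nonneg (gaussianPDFReal_nonneg 0 1 u), Real.norm_eq_abs]
  exact mul_le_mul_of_nonneg_left (abs_log_le_of_le_of_le_mul_exp hq hlow hup)
    (gaussianPDFReal_nonneg 0 1 u)

lemma integrable_gaussianPDFReal_mul_log {r : ℝ → ℝ} {q C : ℝ} (hq : 0 < q)
    (hr : Measurable r) (hlow : ∀ u, q ≤ r u) (hup : ∀ u, r u ≤ C * exp (u ^ 2 / 2)) :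
    Integrable (fun u => gaussianPDFReal 0 1 u * log (r u)) :=
  (integrable_gaussianPDFReal_mul_const_add_sq _).mono'
    ((measurable_gaussianPDFReal 0 1).mul hr.log).aestronglyMeasurable
    (ae_of_all _ fun u => norm_gaussianPDFReal_mul_log_le u hq (hlow u) (hup u))

lemma tendsto_integral_gaussianPDFReal_mul_log {α : Type*} {l : Filter α} [l.IsCountablyGenerated]
    [l.NeBot] {r : α → ℝ → ℝ} {q C m : ℝ} (hq : 0 < q) (hr : ∀ a, Measurable (r a))
    (hlow : ∀ a u, q ≤ r a u) (hup : ∀ a u, r a u ≤ C * exp (u ^ 2 / 2))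
    (hlim : ∀ u, Tendsto (fun a => r a u) l (𝓝 m)) :
    Tendsto (fun a => ∫ u, gaussianPDFReal 0 1 u * log (r a u)) l (𝓝 (log m)) := by
  have hm : m ≠ 0 := (hq.trans_le (ge_of_tendsto' (hlim 0) fun a => hlow a 0)).ne'
  have key := tendsto_integral_filter_of_dominated_convergence _
    (Eventually.of_forall fun a =>
      ((measurable_gaussianPDFReal 0 1).mul (hr a).log).aestronglyMeasurable)
    (Eventually.of_forall fun a =>
      ae_of_all _ fun u => norm_gaussianPDFReal_mul_log_le u hq (hlow a u) (hup a u))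
    (integrable_gaussianPDFReal_mul_const_add_sq _)
    (ae_of_all _ fun u => ((hlim u).log hm).const_mul (gaussianPDFReal 0 1 u))
  rwa [integral_mul_const, integral_gaussianPDFReal_eq_one 0 one_ne_zero, one_mul] at key

section GaussianMixture

variable {ι : Type*} (s : Finset ι) (p w : ι → ℝ)

/-- The mixture density `∑ j, p j φ(y - a w j)` divided by the component `φ(y - a w i)`,
as a function of `u = y - a w i`. -/
noncomputable def mixtureRatio (a : ℝ) (i : ι) (u : ℝ) : ℝ :=
  ∑ j ∈ s, p j * exp (-((w i - w j) * a) * u - ((w i - w j) * a) ^ 2 / 2)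

/-- `I(X; a w(X) + N)` for `X ∼ p` on `s` and `N` standard normal. -/
noncomputable def gaussianMixtureInfo (a : ℝ) : ℝ :=
  ∫ y, ∑ i ∈ s, p i * (gaussianPDFReal 0 1 (y - a * w i) *
    log (gaussianPDFReal 0 1 (y - a * w i) / ∑ j ∈ s, p j * gaussianPDFReal 0 1 (y - a * w j)))

/-- `H(w(X))` for `X ∼ p` on `s`. -/
noncomputable def pushforwardEntropy : ℝ :=
  -∑ i ∈ s, p i * log (∑ j ∈ s with w j = w i, p j)

lemma sum_mul_gaussianPDFReal_sub (a : ℝ) (i : ι) (y : ℝ) :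
    ∑ j ∈ s, p j * gaussianPDFReal 0 1 (y - a * w j) =
      gaussianPDFReal 0 1 (y - a * w i) * mixtureRatio s p w a i (y - a * w i) := by
  rw [mixtureRatio, mul_sum]
  refine sum_congr rfl fun j _ => ?_
  rw [show y - a * w j = y - a * w i + (w i - w j) * a by ring, gaussianPDFReal_zero_one_add]
  ring

lemma measurable_mixtureRatio (a : ℝ) (i : ι) : Measurable (mixtureRatio s p w a i) := by
  unfold mixtureRatio
  fun_prop

variable {s p}

lemma mixtureRatio_le (hp : ∀ j ∈ s, 0 ≤ p j) (a : ℝ) (i : ι) (u : ℝ) :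
    mixtureRatio s p w a i u ≤ (∑ j ∈ s, p j) * exp (u ^ 2 / 2) := by
  rw [mixtureRatio, sum_mul]
  exact sum_le_sum fun j hj =>
    mul_le_mul_of_nonneg_left (exp_neg_mul_sub_sq_div_two_le _ _) (hp j hj)

lemma sum_filter_le_mixtureRatio (hp : ∀ j ∈ s, 0 ≤ p j) (a : ℝ) (i : ι) (u : ℝ) :
    ∑ j ∈ s with w j = w i, p j ≤ mixtureRatio s p w a i u := by
  rw [mixtureRatio, sum_filter]
  refine sum_le_sum fun j hj => ?_
  split_ifs with h
  · simp [h]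
  · exact mul_nonneg (hp j hj) (exp_pos _).le

lemma tendsto_mixtureRatio (i : ι) (u : ℝ) :
    Tendsto (fun a => mixtureRatio s p w a i u) atTop (𝓝 (∑ j ∈ s with w j = w i, p j)) := by
  rw [sum_filter]
  refine tendsto_finsetSum _ fun j _ => ?_
  split_ifs with h
  · simp [h]
  · simpa using
      (tendsto_exp_neg_mul_sub_sq_div_two_atTop (sub_ne_zero.2 (Ne.symm h)) u).const_mul (p j)

lemma gaussianPDFReal_mul_log_div_mixture (a : ℝ) (i : ι) (y : ℝ) :
    gaussianPDFReal 0 1 (y - a * w i) *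
        log (gaussianPDFReal 0 1 (y - a * w i) /
          ∑ j ∈ s, p j * gaussianPDFReal 0 1 (y - a * w j)) =
      -(gaussianPDFReal 0 1 (y - a * w i) * log (mixtureRatio s p w a i (y - a * w i))) := by
  rw [sum_mul_gaussianPDFReal_sub s p w a i,
    div_mul_cancel_left₀ (gaussianPDFReal_pos 0 1 _ one_ne_zero).ne', log_inv, mul_neg]

theorem tendsto_gaussianMixtureInfo_atTop (hp : ∀ i ∈ s, 0 < p i) :
    Tendsto (gaussianMixtureInfo s p w) atTop (𝓝 (pushforwardEntropy s p w)) := by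
  have hp₀ : ∀ j ∈ s, 0 ≤ p j := fun j hj => (hp j hj).le
  have hmass : ∀ i ∈ s, 0 < ∑ j ∈ s with w j = w i, p j := fun i hi =>
    sum_pos' (fun j hj => hp₀ j (mem_filter.1 hj).1) ⟨i, mem_filter.2 ⟨hi, rfl⟩, hp i hi⟩
  have hsplit : ∀ a, gaussianMixtureInfo s p w a =
      -∑ i ∈ s, p i * ∫ u, gaussianPDFReal 0 1 u * log (mixtureRatio s p w a i u) := by
    intro a
    simp_rw [gaussianMixtureInfo, gaussianPDFReal_mul_log_div_mixture]
    rw [integral_finsetSum]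
    · simp_rw [integral_const_mul, integral_neg, mul_neg, sum_neg_distrib]
      congr! 3 with i
      exact integral_sub_right_eq_self
        (fun u => gaussianPDFReal 0 1 u * log (mixtureRatio s p w a i u)) _
    · intro i hi
      exact ((integrable_gaussianPDFReal_mul_log (hmass i hi) (measurable_mixtureRatio s p w a i)
        (sum_filter_le_mixtureRatio w hp₀ a i) (mixtureRatio_le w hp₀ a i)).comp_sub_right
          (a * w i)).neg.const_mul (p i)
  rw [funext hsplit, pushforwardEntropy]
  refine (tendsto_finsetSum _ fun i hi => ?_).neg
  exact (tendsto_integral_gaussianPDFReal_mul_log (hmass i hi) (measurable_mixtureRatio s p w · i)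
    (fun a => sum_filter_le_mixtureRatio w hp₀ a i) (fun a => mixtureRatio_le w hp₀ a i)
    (tendsto_mixtureRatio w i)).const_mul (p i)

end GaussianMixture

/-- BPSK rate-loss observation of the paper: with both users sending equiprobable `±1` over unit
channel gains and equal powers, the sum mutual information of the two-user Gaussian MAC
saturates at `H(x₁+x₂) = (3/2)·log 2` (1.5 bits) as `snr → ∞`. -/
theorem stmt_15
    (φ : ℝ → ℝ) (hφ : φ = fun t => (Real.sqrt (2 * Real.pi))⁻¹ * Real.exp (-t ^ 2 / 2))
    (py : ℝ → ℝ → ℝ)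
    (hpy : py = fun snr y => (1 / 4) * ∑ s₁ ∈ ({-1, 1} : Finset ℝ),
        ∑ s₂ ∈ ({-1, 1} : Finset ℝ), φ (y - Real.sqrt snr * (s₁ + s₂)))
    (I : ℝ → ℝ)
    (hI : I = fun snr => ∫ y : ℝ, (1 / 4) * ∑ s₁ ∈ ({-1, 1} : Finset ℝ),
        ∑ s₂ ∈ ({-1, 1} : Finset ℝ), φ (y - Real.sqrt snr * (s₁ + s₂)) *
          Real.log (φ (y - Real.sqrt snr * (s₁ + s₂)) / py snr y)) :
    Tendsto I atTop (nhds ((3 / 2) * Real.log 2)) := by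
  set bpsk : Finset (ℝ × ℝ) := {-1, 1} ×ˢ {-1, 1}
  have hφ' : φ = gaussianPDFReal 0 1 := by
    ext t
    simp [hφ, gaussianPDFReal]
  have hI' : I = gaussianMixtureInfo bpsk (fun _ => 1 / 4) (fun x => x.1 + x.2) ∘ Real.sqrt := by
    ext snr
    simp only [hI, hpy, hφ', gaussianMixtureInfo, Function.comp, mul_sum, bpsk, sum_product]
  have hH : pushforwardEntropy bpsk (fun _ => 1 / 4) (fun x => x.1 + x.2) = 3 / 2 * log 2 := by
    simp only [pushforwardEntropy, bpsk, sum_filter, sum_product,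
      sum_pair (show (-1 : ℝ) ≠ 1 by norm_num)]
    norm_num
    rw [one_div, one_div, log_inv, log_inv, show (4 : ℝ) = 2 ^ 2 by norm_num, log_pow]
    ring
  rw [hI', ← hH]
  exact (tendsto_gaussianMixtureInfo_atTop _ fun _ _ => by norm_num).comp tendsto_sqrt_atTop
end

section
/- Let k ≥ 1, let q₁,…,q_k be positive reals summing to 1, let μ₁,…,μ_k ∈ ℝ, let σ > 0, let φ_i(y) = (1/(σ√(2π)))·exp(−(y−μ_i)²/(2σ²)), and let p(y) = Σ_j q_j·φ_j(y). Then for each i, ∫_ℝ (1 + log p(y))·φ_i′(y) dy = −∫_ℝ (φ_i(y)/p(y))·p′(y) dy, and both integrals are finite. -/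
/-!
Integrate by parts with `u = 1 + log p` and `v = φᵢ`, so that `u' = p' / p`. All three
integrands `u v'`, `u' v`, `u v` are then a polynomial in `|y - μᵢ|` times `φᵢ`, hence integrable:
from `qᵢ φᵢ ≤ p ≤ (∑ q) · sup φᵢ` the function `log p` grows at most quadratically, and since each
`φⱼ' / φⱼ` is affine, the score `p' / p` is a convex combination of affine functions and grows at
most linearly.
-/

open MeasureTheory Finset Real

theorem integrable_one_add_abs_pow_mul_exp_neg_mul_sq {b : ℝ} (hb : 0 < b) (n : ℕ) :
    Integrable fun t : ℝ => (1 + |t|) ^ n * exp (-b * t ^ 2) := by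
  have hmoment (k : ℕ) : Integrable fun t : ℝ => |t| ^ k * exp (-b * t ^ 2) := by
    have := (integrable_rpow_mul_exp_neg_mul_sq hb (s := k)
      (by linarith [k.cast_nonneg (α := ℝ)])).abs
    simpa [rpow_natCast, abs_mul, abs_pow] using this
  refine (integrable_finsetSum (range (n + 1)) fun k _ =>
    (hmoment k).const_mul (n.choose k : ℝ)).congr (.of_forall fun t => ?_)
  simp only [add_comm 1 |t|, add_pow, one_pow, mul_one, Finset.sum_mul]
  exact Finset.sum_congr rfl fun k _ => by ring

noncomputable def gaussianBump (c m σ y : ℝ) : ℝ := c * exp (-(y - m) ^ 2 / (2 * σ ^ 2))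

section GaussianBump

variable (c m σ : ℝ)

@[fun_prop]
theorem continuous_gaussianBump : Continuous (gaussianBump c m σ) := by
  unfold gaussianBump; fun_prop

theorem hasDerivAt_gaussianBump (y : ℝ) :
    HasDerivAt (gaussianBump c m σ) (-(y - m) / σ ^ 2 * gaussianBump c m σ y) y := by
  have hexponent : HasDerivAt (fun y => -(y - m) ^ 2 / (2 * σ ^ 2)) (-(y - m) / σ ^ 2) y := by
    refine ((((hasDerivAt_id y).sub_const m).pow 2).neg.div_const (2 * σ ^ 2)).congr_deriv ?_
    simp only [id]; ring
  exact (hexponent.exp.const_mul c).congr_deriv (by rw [gaussianBump]; ring)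

variable {σ}

theorem integrable_mul_gaussianBump_of_abs_le {f : ℝ → ℝ} (hf : AEStronglyMeasurable f)
    (hσ : σ ≠ 0) {C : ℝ} (n : ℕ) (hfC : ∀ y, |f y| ≤ C * (1 + |y - m|) ^ n) :
    Integrable fun y => f y * gaussianBump c m σ y := by
  have hb : 0 < 1 / (2 * σ ^ 2) := by positivity
  have hg := ((integrable_one_add_abs_pow_mul_exp_neg_mul_sq hb n).comp_sub_right m).const_mul
    (C * |c|)
  refine hg.mono' (hf.mul (continuous_gaussianBump c m σ).aestronglyMeasurable)
    (.of_forall fun y => ?_)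
  rw [norm_mul, norm_eq_abs, norm_eq_abs, gaussianBump, abs_mul, abs_exp]
  calc |f y| * (|c| * exp (-(y - m) ^ 2 / (2 * σ ^ 2)))
      ≤ C * (1 + |y - m|) ^ n * (|c| * exp (-(y - m) ^ 2 / (2 * σ ^ 2))) := by
        gcongr; exact hfC y
    _ = _ := by ring_nf

variable (σ) {c}

theorem gaussianBump_pos (hc : 0 < c) (y : ℝ) : 0 < gaussianBump c m σ y := by
  unfold gaussianBump; positivity

theorem gaussianBump_nonneg (hc : 0 ≤ c) (y : ℝ) : 0 ≤ gaussianBump c m σ y := by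
  unfold gaussianBump; positivity

theorem gaussianBump_le (hc : 0 ≤ c) (y : ℝ) : gaussianBump c m σ y ≤ c :=
  mul_le_of_le_one_right hc <| exp_le_one_iff.2 <|
    div_nonpos_of_nonpos_of_nonneg (neg_nonpos.2 (sq_nonneg _)) (by positivity)

theorem log_gaussianBump (hc : 0 < c) (y : ℝ) :
    log (gaussianBump c m σ y) = log c - (y - m) ^ 2 / (2 * σ ^ 2) := by
  rw [gaussianBump, log_mul hc.ne' (exp_pos _).ne', log_exp]; ring

end GaussianBump

noncomputable def gaussianMixture {ι : Type*} [Fintype ι] (q μ : ι → ℝ) (c σ y : ℝ) : ℝ :=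
  ∑ j, q j * gaussianBump c (μ j) σ y

section GaussianMixture

variable {ι : Type*} [Fintype ι] (q μ : ι → ℝ) (c σ : ℝ)

theorem continuous_gaussianMixture : Continuous (gaussianMixture q μ c σ) := by
  unfold gaussianMixture; fun_prop

theorem hasDerivAt_gaussianMixture (y : ℝ) :
    HasDerivAt (gaussianMixture q μ c σ)
      (∑ j, q j * (-(y - μ j) / σ ^ 2 * gaussianBump c (μ j) σ y)) y :=
  HasDerivAt.fun_sum fun j _ => (hasDerivAt_gaussianBump c (μ j) σ y).const_mul (q j)

variable {q c}

theorem mul_gaussianBump_le_gaussianMixture (hq : ∀ j, 0 ≤ q j) (hc : 0 ≤ c) (i : ι) (y : ℝ) :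
    q i * gaussianBump c (μ i) σ y ≤ gaussianMixture q μ c σ y :=
  single_le_sum (f := fun j => q j * gaussianBump c (μ j) σ y)
    (fun j _ => mul_nonneg (hq j) (gaussianBump_nonneg (μ j) σ hc y)) (mem_univ i)

theorem gaussianMixture_pos [Nonempty ι] (hq : ∀ j, 0 < q j) (hc : 0 < c) (y : ℝ) :
    0 < gaussianMixture q μ c σ y := by
  obtain ⟨i⟩ := ‹Nonempty ι›
  exact (mul_pos (hq i) (gaussianBump_pos (μ i) σ hc y)).trans_le
    (mul_gaussianBump_le_gaussianMixture μ σ (fun j => (hq j).le) hc.le i y)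

theorem gaussianMixture_le (hq : ∀ j, 0 ≤ q j) (hc : 0 ≤ c) (y : ℝ) :
    gaussianMixture q μ c σ y ≤ (∑ j, q j) * c := by
  rw [sum_mul]
  exact sum_le_sum fun j _ => mul_le_mul_of_nonneg_left (gaussianBump_le (μ j) σ hc y) (hq j)

theorem abs_deriv_gaussianMixture_le (hq : ∀ j, 0 ≤ q j) (hc : 0 ≤ c) {m M : ℝ}
    (hM : ∀ j, |μ j - m| ≤ M) (y : ℝ) :
    |deriv (gaussianMixture q μ c σ) y| ≤ (|y - m| + M) / σ ^ 2 * gaussianMixture q μ c σ y := by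
  rw [(hasDerivAt_gaussianMixture q μ c σ y).deriv, gaussianMixture, mul_sum]
  refine (abs_sum_le_sum_abs _ _).trans (sum_le_sum fun j _ => ?_)
  have hbump := gaussianBump_nonneg (μ j) σ hc y
  have hdist : |y - μ j| ≤ |y - m| + M :=
    (abs_sub_le y m (μ j)).trans (by linarith [hM j, abs_sub_comm m (μ j)])
  rw [abs_mul, abs_mul, abs_div, abs_neg, abs_of_nonneg (hq j), abs_of_nonneg hbump,
    abs_of_nonneg (sq_nonneg σ)]
  calc q j * (|y - μ j| / σ ^ 2 * gaussianBump c (μ j) σ y)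
      = q j * gaussianBump c (μ j) σ y * (|y - μ j| / σ ^ 2) := by ring
    _ ≤ q j * gaussianBump c (μ j) σ y * ((|y - m| + M) / σ ^ 2) := by
        gcongr; exact mul_nonneg (hq j) hbump
    _ = _ := by ring

theorem exists_abs_deriv_div_gaussianMixture_le (hq : ∀ j, 0 < q j) (hc : 0 < c) (i : ι) :
    ∃ B, ∀ y, |deriv (gaussianMixture q μ c σ) y / gaussianMixture q μ c σ y|
      ≤ B * (1 + |y - μ i|) := by
  have : Nonempty ι := ⟨i⟩
  set M := ∑ j, |μ j - μ i|
  have hM j : |μ j - μ i| ≤ M := single_le_sum (f := fun j => |μ j - μ i|)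
    (fun j _ => abs_nonneg _) (mem_univ j)
  refine ⟨(1 + M) / σ ^ 2, fun y => ?_⟩
  have hp := gaussianMixture_pos μ σ hq hc y
  rw [abs_div, abs_of_pos hp, div_le_iff₀ hp]
  refine (abs_deriv_gaussianMixture_le μ σ (fun j => (hq j).le) hc.le hM y).trans ?_
  have hM0 : 0 ≤ M := (abs_nonneg _).trans (hM i)
  have hlin : |y - μ i| + M ≤ (1 + M) * (1 + |y - μ i|) := by nlinarith [abs_nonneg (y - μ i)]
  gcongr
  calc (|y - μ i| + M) / σ ^ 2 ≤ (1 + M) * (1 + |y - μ i|) / σ ^ 2 := by gcongr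
    _ = _ := by ring

theorem exists_abs_one_add_log_gaussianMixture_le (hq : ∀ j, 0 < q j) (hc : 0 < c) (i : ι) :
    ∃ A, ∀ y, |1 + log (gaussianMixture q μ c σ y)| ≤ A * (1 + |y - μ i|) ^ 2 := by
  have : Nonempty ι := ⟨i⟩
  set A₀ := 1 + |log (q i)| + |log c| + |log ((∑ j, q j) * c)| with hA₀_def
  refine ⟨A₀ + 1 / (2 * σ ^ 2), fun y => ?_⟩
  have hp := gaussianMixture_pos μ σ hq hc y
  have hlower : log (q i) + (log c - (y - μ i) ^ 2 / (2 * σ ^ 2))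
      ≤ log (gaussianMixture q μ c σ y) := by
    rw [← log_gaussianBump (μ i) σ hc, ← log_mul (hq i).ne' (gaussianBump_pos (μ i) σ hc y).ne']
    exact log_le_log (mul_pos (hq i) (gaussianBump_pos (μ i) σ hc y))
      (mul_gaussianBump_le_gaussianMixture μ σ (fun j => (hq j).le) hc.le i y)
  have hupper : log (gaussianMixture q μ c σ y) ≤ log ((∑ j, q j) * c) :=
    log_le_log hp (gaussianMixture_le μ σ (fun j => (hq j).le) hc.le y)
  have habs : |1 + log (gaussianMixture q μ c σ y)| ≤ A₀ + 1 / (2 * σ ^ 2) * (y - μ i) ^ 2 := by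
    have : (y - μ i) ^ 2 / (2 * σ ^ 2) = 1 / (2 * σ ^ 2) * (y - μ i) ^ 2 := by ring
    have : 0 ≤ 1 / (2 * σ ^ 2) * (y - μ i) ^ 2 := by positivity
    rw [abs_le]
    constructor <;> linarith [neg_abs_le (log (q i)), neg_abs_le (log c),
      le_abs_self (log ((∑ j, q j) * c)), abs_nonneg (log (q i)), abs_nonneg (log c),
      abs_nonneg (log ((∑ j, q j) * c))]
  have hone_le : 1 ≤ (1 + |y - μ i|) ^ 2 := by nlinarith [abs_nonneg (y - μ i)]
  have hsq_le : (y - μ i) ^ 2 ≤ (1 + |y - μ i|) ^ 2 := by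
    nlinarith [abs_nonneg (y - μ i), sq_abs (y - μ i)]
  have hA₀_nonneg : 0 ≤ A₀ := by positivity
  calc _ ≤ A₀ + 1 / (2 * σ ^ 2) * (y - μ i) ^ 2 := habs
    _ ≤ A₀ * (1 + |y - μ i|) ^ 2 + 1 / (2 * σ ^ 2) * (1 + |y - μ i|) ^ 2 := by gcongr; nlinarith
    _ = _ := by ring

end GaussianMixture

section IntegrationByParts

variable {ι : Type*} [Fintype ι] {q : ι → ℝ} (μ : ι → ℝ) {c σ : ℝ}

theorem integrable_one_add_log_gaussianMixture_mul_mul_gaussianBump (hq : ∀ j, 0 < q j)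
    (hc : 0 < c) (hσ : σ ≠ 0) (i : ι) {f : ℝ → ℝ} (hf : AEStronglyMeasurable f) {C : ℝ} (n : ℕ)
    (hfC : ∀ y, |f y| ≤ C * (1 + |y - μ i|) ^ n) :
    Integrable fun y => (1 + log (gaussianMixture q μ c σ y)) * f y * gaussianBump c (μ i) σ y := by
  obtain ⟨A, hA⟩ := exists_abs_one_add_log_gaussianMixture_le μ σ hq hc i
  have hlog : Measurable fun y => 1 + log (gaussianMixture q μ c σ y) :=
    (continuous_gaussianMixture q μ c σ).measurable.log.const_add 1
  refine integrable_mul_gaussianBump_of_abs_le c (μ i) (hlog.aestronglyMeasurable.mul hf) hσ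
    (C := A * C) (n + 2) fun y => ?_
  simp only [abs_mul]
  calc _ ≤ A * (1 + |y - μ i|) ^ 2 * (C * (1 + |y - μ i|) ^ n) :=
        mul_le_mul (hA y) (hfC y) (abs_nonneg _) ((abs_nonneg _).trans (hA y))
    _ = _ := by ring

theorem integrable_one_add_log_gaussianMixture_mul_deriv_gaussianBump (hq : ∀ j, 0 < q j)
    (hc : 0 < c) (hσ : σ ≠ 0) (i : ι) :
    Integrable fun y =>
      (1 + log (gaussianMixture q μ c σ y)) * deriv (gaussianBump c (μ i) σ) y := by
  have hslope : ∀ y, |-(y - μ i) / σ ^ 2| ≤ 1 / σ ^ 2 * (1 + |y - μ i|) ^ 1 := fun y => by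
    rw [abs_div, abs_neg, abs_of_nonneg (sq_nonneg σ), pow_one, div_eq_mul_one_div,
      mul_comm]
    gcongr; linarith
  refine (integrable_one_add_log_gaussianMixture_mul_mul_gaussianBump μ hq hc hσ i
    (by fun_prop : Continuous fun y => -(y - μ i) / σ ^ 2).aestronglyMeasurable 1 hslope).congr
    (.of_forall fun y => ?_)
  simp only [(hasDerivAt_gaussianBump c (μ i) σ y).deriv, mul_assoc]

theorem integrable_gaussianBump_div_gaussianMixture_mul_deriv (hq : ∀ j, 0 < q j)
    (hc : 0 < c) (hσ : σ ≠ 0) (i : ι) :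
    Integrable fun y => gaussianBump c (μ i) σ y / gaussianMixture q μ c σ y *
      deriv (gaussianMixture q μ c σ) y := by
  obtain ⟨B, hB⟩ := exists_abs_deriv_div_gaussianMixture_le μ σ hq hc i
  have hscore :
      Measurable fun y => deriv (gaussianMixture q μ c σ) y / gaussianMixture q μ c σ y :=
    (measurable_deriv _).div (continuous_gaussianMixture q μ c σ).measurable
  refine (integrable_mul_gaussianBump_of_abs_le c (μ i) hscore.aestronglyMeasurable hσ 1
    fun y => (pow_one (1 + |y - μ i|)).symm ▸ hB y).congr (.of_forall fun y => ?_)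
  ring

theorem integral_one_add_log_gaussianMixture_mul_deriv_gaussianBump (hq : ∀ j, 0 < q j)
    (hc : 0 < c) (hσ : σ ≠ 0) (i : ι) :
    ∫ y, (1 + log (gaussianMixture q μ c σ y)) * deriv (gaussianBump c (μ i) σ) y =
      -∫ y, gaussianBump c (μ i) σ y / gaussianMixture q μ c σ y *
        deriv (gaussianMixture q μ c σ) y := by
  have : Nonempty ι := ⟨i⟩
  have hu y : HasDerivAt (fun y => 1 + log (gaussianMixture q μ c σ y))
      (deriv (gaussianMixture q μ c σ) y / gaussianMixture q μ c σ y) y :=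
    ((hasDerivAt_gaussianMixture q μ c σ y).differentiableAt.hasDerivAt.log
      (gaussianMixture_pos μ σ hq hc y).ne').const_add 1
  have hv y : HasDerivAt (gaussianBump c (μ i) σ) (deriv (gaussianBump c (μ i) σ) y) y :=
    (hasDerivAt_gaussianBump c (μ i) σ y).differentiableAt.hasDerivAt
  have huv := integrable_one_add_log_gaussianMixture_mul_mul_gaussianBump μ hq hc hσ i
    (f := fun _ => 1) aestronglyMeasurable_const (C := 1) 0 (fun y => by simp)
  rw [integral_mul_deriv_eq_deriv_mul_of_integrable (fun y _ => hu y) (fun y _ => hv y)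
    (integrable_one_add_log_gaussianMixture_mul_deriv_gaussianBump μ hq hc hσ i)
    ((integrable_gaussianBump_div_gaussianMixture_mul_deriv μ hq hc hσ i).congr
      (.of_forall fun y => by simp only [Pi.mul_apply]; ring))
    (huv.congr (.of_forall fun y => by simp only [Pi.mul_apply, mul_one]))]
  congr 2 with y
  ring

end IntegrationByParts

theorem stmt_16_general (k : ℕ)
    (q : Fin k → ℝ) (hqpos : ∀ i, 0 < q i)
    (μ : Fin k → ℝ) (σ : ℝ) (hσ : 0 < σ)
    (φf : Fin k → ℝ → ℝ)
    (hφf : φf = fun i y => (1 / (σ * Real.sqrt (2 * Real.pi))) *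
        Real.exp (-(y - μ i) ^ 2 / (2 * σ ^ 2)))
    (p : ℝ → ℝ) (hp : p = fun y => ∑ j, q j * φf j y) :
    ∀ i : Fin k,
      Integrable (fun y : ℝ => (1 + Real.log (p y)) * deriv (φf i) y) ∧
      Integrable (fun y : ℝ => (φf i y / p y) * deriv p y) ∧
      (∫ y : ℝ, (1 + Real.log (p y)) * deriv (φf i) y)
        = -∫ y : ℝ, (φf i y / p y) * deriv p y := by
  intro i
  have hc : 0 < 1 / (σ * Real.sqrt (2 * Real.pi)) := by positivity
  subst hφf hp
  exact ⟨integrable_one_add_log_gaussianMixture_mul_deriv_gaussianBump μ hqpos hc hσ.ne' i,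
    integrable_gaussianBump_div_gaussianMixture_mul_deriv μ hqpos hc hσ.ne' i,
    integral_one_add_log_gaussianMixture_mul_deriv_gaussianBump μ hqpos hc hσ.ne' i⟩

/-- Integration-by-parts identity from the paper's Appendix A (steps (71)–(73)): for a finite
Gaussian mixture `p = Σ q_j φ_j` with common variance, for each component `i`,
`∫ (1 + log p(y))·φ_i′(y) dy = −∫ (φ_i(y)/p(y))·p′(y) dy`, and both integrals are finite. -/
theorem stmt_16 (k : ℕ) (hk : 1 ≤ k)
    (q : Fin k → ℝ) (hqpos : ∀ i, 0 < q i) (hqsum : ∑ i, q i = 1)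
    (μ : Fin k → ℝ) (σ : ℝ) (hσ : 0 < σ)
    (φf : Fin k → ℝ → ℝ)
    (hφf : φf = fun i y => (1 / (σ * Real.sqrt (2 * Real.pi))) *
        Real.exp (-(y - μ i) ^ 2 / (2 * σ ^ 2)))
    (p : ℝ → ℝ) (hp : p = fun y => ∑ j, q j * φf j y) :
    ∀ i : Fin k,
      Integrable (fun y : ℝ => (1 + Real.log (p y)) * deriv (φf i) y) ∧
      Integrable (fun y : ℝ => (φf i y / p y) * deriv p y) ∧
      (∫ y : ℝ, (1 + Real.log (p y)) * deriv (φf i) y)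
        = -∫ y : ℝ, (φf i y / p y) * deriv p y :=
  stmt_16_general k q hqpos μ σ hσ φf hφf p hp
end
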